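/- arXiv:2407.18560 — 12 statements merged into one kernel-verified Lean document; each statement's English description precedes it below -/
import Mathlib

section
/- For every n : ℕ and every 2-AND-OR-BN F on n nodes, if F is observable with an observation set S of size m, then (m : ℝ) ≥ 0.188 * n. -/
/-- `F` is observable with observation set `S` if the map from an initial state to its
output sequence (the restriction of each iterate to `S`) is injective. -/
def observable {n : ℕ} (F : (Fin n → Bool) → (Fin n → Bool)) (S : Finset (Fin n)) : Prop :=
  Function.Injective (fun (x : Fin n → Bool) => fun (t : ℕ) (i : S) => (F^[t] x) i.val)

/-- `F` is a `K`-AND-OR-BN: each local function is the AND or the OR of `K` literals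
on pairwise distinct variables (a literal is `x_{i_j} XOR b_j`). -/
def isAndOrBN {n : ℕ} (K : ℕ) (F : (Fin n → Bool) → (Fin n → Bool)) : Prop :=
  ∀ i : Fin n, ∃ idx : Fin K → Fin n, Function.Injective idx ∧ ∃ b : Fin K → Bool,
    (∀ x, F x i = Finset.univ.inf (fun j => Bool.xor (x (idx j)) (b j))) ∨
    (∀ x, F x i = Finset.univ.sup (fun j => Bool.xor (x (idx j)) (b j)))

/-!
An initial state `x` is determined by its observation at time `0` together with the next state
`F x`, so `x ↦ (x|_S, F x)` is injective. Each node of a `K`-AND-OR network takes one of its two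
values on at most a `2⁻ᴷ` fraction of the states. Weighting that value by `p = 2⁻ᴷ` and the other
by `1 - p`, independently over the nodes, and the observation uniformly, gives a probability
weight on pairs (observation, next state); Jensen's inequality for `log` along the injection then
yields `n log 2 ≤ |S| log 2 + n H(p)`. For `K = 2`, `1 - H(1/4) / log 2 = (3/4) log₂ 3 - 1 > 0.188`.
-/

open Finset Real

lemma card_filter_forall_mem_eq {ι β : Type*} [Fintype ι] [DecidableEq ι] [Fintype β]
    [DecidableEq β] (T : Finset ι) (c : ι → β) :
    #{x : ι → β | ∀ i ∈ T, x i = c i} = Fintype.card β ^ #Tᶜ := by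
  have hpi : ({x : ι → β | ∀ i ∈ T, x i = c i} : Finset (ι → β)) =
      Fintype.piFinset fun i => if i ∈ T then {c i} else univ := by
    ext x
    simp only [mem_filter, mem_univ, true_and, Fintype.mem_piFinset]
    refine forall_congr' fun i => ?_
    split_ifs <;> simp_all
  rw [hpi, Fintype.card_piFinset]
  simp only [apply_ite card, card_singleton, card_univ]
  rw [prod_ite, prod_const_one, one_mul, prod_const]
  simp [filter_not, compl_eq_univ_sdiff]

lemma card_filter_forall_apply_eq_mul {ι κ β : Type*} [Fintype ι] [DecidableEq ι] [Fintype κ]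
    [Fintype β] [DecidableEq β] [Inhabited β] {idx : κ → ι} (hidx : Function.Injective idx)
    (c : κ → β) :
    #{x : ι → β | ∀ j, x (idx j) = c j} * Fintype.card β ^ Fintype.card κ =
      Fintype.card β ^ Fintype.card ι := by
  set T := univ.map ⟨idx, hidx⟩
  have hmem (x : ι → β) :
      (∀ j, x (idx j) = c j) ↔ ∀ i ∈ T, x i = Function.extend idx c default i := by
    simp [T, hidx.extend_apply]
  rw [filter_congr fun x _ => hmem x, card_filter_forall_mem_eq, ← pow_add, ← card_univ (α := κ),
    ← card_map ⟨idx, hidx⟩, card_compl_add_card]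

lemma isAndOrBN.exists_card_filter_mul_le {n K : ℕ} {F : (Fin n → Bool) → (Fin n → Bool)}
    (hF : isAndOrBN K F) (i : Fin n) : ∃ r, #{x | F x i = r} * 2 ^ K ≤ 2 ^ n := by
  obtain ⟨idx, hidx, b, hand | hor⟩ := hF i
  · refine ⟨true, le_of_eq ?_⟩
    have hmem (x : Fin n → Bool) : F x i = true ↔ ∀ j, x (idx j) = !b j := by
      rw [hand, ← top_eq_true, Finset.inf_eq_top_iff]
      simp [top_eq_true, Bool.eq_not_iff]
    rw [filter_congr fun x _ => hmem x]
    convert card_filter_forall_apply_eq_mul hidx (!b ·) <;> simp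
  · refine ⟨false, le_of_eq ?_⟩
    have hmem (x : Fin n → Bool) : F x i = false ↔ ∀ j, x (idx j) = b j := by
      rw [hor, ← bot_eq_false, Finset.sup_eq_bot_iff]
      simp [bot_eq_false]
    rw [filter_congr fun x _ => hmem x]
    convert card_filter_forall_apply_eq_mul hidx b <;> simp

lemma observable.injective_prodMk {n : ℕ} {F : (Fin n → Bool) → (Fin n → Bool)}
    {S : Finset (Fin n)} (hobs : observable F S) :
    Function.Injective fun x : Fin n → Bool => ((fun i : S => x i), F x) := by
  intro x y hxy
  simp only [Prod.mk.injEq] at hxy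
  refine hobs (funext fun t => ?_)
  cases t with
  | zero => exact hxy.1
  | succ t => simp only [Function.iterate_succ_apply, hxy.2]

def bernoulliWeight (p : ℝ) (r v : Bool) : ℝ := if v = r then p else 1 - p

lemma bernoulliWeight_pos {p : ℝ} (hp₀ : 0 < p) (hp₁ : p < 1) (r v : Bool) :
    0 < bernoulliWeight p r v := by
  unfold bernoulliWeight
  split_ifs <;> linarith

lemma sum_prod_bernoulliWeight {ι : Type*} [Fintype ι] [DecidableEq ι] (p : ℝ) (r : ι → Bool) :
    ∑ y : ι → Bool, ∏ i, bernoulliWeight p (r i) (y i) = 1 := by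
  rw [← Fintype.prod_sum]
  refine prod_eq_one fun i _ => ?_
  cases r i <;> simp [bernoulliWeight]

lemma neg_mul_binEntropy_le_sum_log_bernoulliWeight {α : Type*} [Fintype α] (f : α → Bool)
    (r : Bool) {p : ℝ} (hp₀ : 0 < p) (hp : p ≤ 1 / 2)
    (hcount : (#{x | f x = r} : ℝ) ≤ p * Fintype.card α) :
    -(Fintype.card α * binEntropy p) ≤ ∑ x, log (bernoulliWeight p r (f x)) := by
  have hsum : ∑ x, log (bernoulliWeight p r (f x)) =
      Fintype.card α * log (1 - p) + #{x | f x = r} * (log p - log (1 - p)) := by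
    calc ∑ x, log (bernoulliWeight p r (f x))
        = ∑ x, (log (1 - p) + if f x = r then log p - log (1 - p) else 0) := by
          refine sum_congr rfl fun x _ => ?_
          unfold bernoulliWeight
          split_ifs <;> ring
      _ = _ := by rw [sum_add_distrib, ← sum_filter]; simp; ring
  have hlog : log p ≤ log (1 - p) := log_le_log hp₀ (by linarith)
  rw [hsum, binEntropy, log_inv, log_inv]
  nlinarith [mul_le_mul_of_nonpos_right hcount (sub_nonpos.2 hlog)]

lemma sum_log_le_of_injective {α β : Type*} [Fintype α] [Nonempty α] [Fintype β] {g : α → β}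
    (hg : Function.Injective g) {w : β → ℝ} (hw : ∀ b, 0 < w b) (hsum : ∑ b, w b ≤ 1) :
    ∑ x, log (w (g x)) ≤ -(Fintype.card α * log (Fintype.card α)) := by
  set N : ℝ := (Fintype.card α : ℝ)
  have hN : 0 < N := by positivity
  have hjensen := strictConcaveOn_log_Ioi.concaveOn.le_map_sum (t := univ)
    (w := fun _ => N⁻¹) (p := fun x => w (g x)) (fun _ _ => by positivity)
    (by simp [N, card_univ, hN.ne']) (fun x _ => hw (g x))
  have himage : ∑ x, w (g x) ≤ 1 := by
    calc ∑ x, w (g x) = ∑ b ∈ univ.map ⟨g, hg⟩, w b := (sum_map univ ⟨g, hg⟩ w).symm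
      _ ≤ 1 := (sum_le_sum_of_subset_of_nonneg (subset_univ _)
          fun b _ _ => (hw b).le).trans hsum
  simp only [smul_eq_mul, ← mul_sum] at hjensen
  have hlog := hjensen.trans <| log_le_log
    (by positivity [sum_pos (fun x _ => hw (g x)) univ_nonempty])
    (mul_le_of_le_one_right (by positivity) himage)
  rw [log_inv, inv_mul_le_iff₀ hN] at hlog
  linarith

lemma sum_sum_log_bernoulliWeight_le_of_injective {α γ ι : Type*} [Fintype α] [Nonempty α]
    [Fintype γ] [Fintype ι] [DecidableEq ι] {g : α → γ × (ι → Bool)} (hg : Function.Injective g)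
    {p : ℝ} (hp₀ : 0 < p) (hp₁ : p < 1) (r : ι → Bool) :
    ∑ i, ∑ x, log (bernoulliWeight p (r i) ((g x).2 i)) ≤
      Fintype.card α * (log (Fintype.card γ) - log (Fintype.card α)) := by
  have : Nonempty γ := ⟨(g (Classical.arbitrary α)).1⟩
  set w : γ × (ι → Bool) → ℝ :=
    fun z => (Fintype.card γ : ℝ)⁻¹ * ∏ i, bernoulliWeight p (r i) (z.2 i)
  have hq_pos (i : ι) (v : Bool) : 0 < bernoulliWeight p (r i) v := bernoulliWeight_pos hp₀ hp₁ _ _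
  have hw_pos (z) : 0 < w z := mul_pos (by positivity) (prod_pos fun i _ => hq_pos i _)
  have hw_sum : ∑ z, w z = 1 := by
    simp [w, Fintype.sum_prod_type, ← mul_sum, sum_prod_bernoulliWeight]
  have hlog_w (z : γ × (ι → Bool)) :
      log (w z) = -log (Fintype.card γ) + ∑ i, log (bernoulliWeight p (r i) (z.2 i)) := by
    rw [log_mul (by positivity) (prod_pos fun i _ => hq_pos i _).ne', log_inv,
      log_prod fun i _ => (hq_pos i _).ne']
  have hgibbs := sum_log_le_of_injective hg hw_pos hw_sum.le
  simp only [hlog_w, sum_add_distrib, sum_const, card_univ, nsmul_eq_mul] at hgibbs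
  rw [sum_comm] at hgibbs
  linarith

theorem isAndOrBN.mul_sub_binEntropy_le {n K : ℕ} {F : (Fin n → Bool) → (Fin n → Bool)}
    {S : Finset (Fin n)} (hK : 1 ≤ K) (hF : isAndOrBN K F) (hobs : observable F S) :
    n * (log 2 - binEntropy (2 ^ K)⁻¹) ≤ #S * log 2 := by
  set p : ℝ := (2 ^ K)⁻¹
  have hp₀ : 0 < p := by positivity
  have hp : p ≤ 1 / 2 := by
    rw [one_div]
    exact inv_anti₀ two_pos (le_self_pow₀ one_le_two (by omega))
  choose r hr using hF.exists_card_filter_mul_le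
  have hnode (i : Fin n) :
      -(2 ^ n * binEntropy p) ≤ ∑ x : Fin n → Bool, log (bernoulliWeight p (r i) (F x i)) := by
    have hcount : (#{x | F x i = r i} : ℝ) ≤ p * 2 ^ n := by
      rw [le_inv_mul_iff₀ (by positivity), mul_comm]
      exact_mod_cast hr i
    simpa using neg_mul_binEntropy_le_sum_log_bernoulliWeight (F · i) (r i) hp₀ hp (by simpa)
  have hnodes := sum_le_sum fun i (_ : i ∈ univ) => hnode i
  have hgibbs :=
    sum_sum_log_bernoulliWeight_le_of_injective hobs.injective_prodMk hp₀ (by linarith) r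
  simp only [sum_const, card_univ, Fintype.card_fin, nsmul_eq_mul] at hnodes
  simp only [Fintype.card_fun, Fintype.card_bool, Fintype.card_coe, Fintype.card_fin] at hgibbs
  push_cast at hgibbs
  rw [log_pow, log_pow] at hgibbs
  refine le_of_mul_le_mul_left ?_ (by positivity : (0 : ℝ) < 2 ^ n)
  linarith

lemma mul_log_two_le_log_two_sub_binEntropy_four_inv :
    0.188 * log 2 ≤ log 2 - binEntropy (2 ^ 2)⁻¹ := by
  have hlog4 : log 4 = 2 * log 2 := by
    rw [show (4 : ℝ) = 2 ^ 2 by norm_num, log_pow, Nat.cast_ofNat]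
  have h3 : 198 * log 2 ≤ 125 * log 3 := by
    have := log_le_log (by positivity) (show (2 : ℝ) ^ 198 ≤ 3 ^ 125 by norm_num)
    rwa [log_pow, log_pow, Nat.cast_ofNat, Nat.cast_ofNat] at this
  rw [binEntropy, show (1 : ℝ) - (2 ^ 2)⁻¹ = 3 / 4 by norm_num, inv_div, log_div (by norm_num)
    (by norm_num), show ((2 : ℝ) ^ 2)⁻¹⁻¹ = 4 by norm_num, hlog4]
  norm_num
  linarith

theorem two_and_or_lower_bound (n m : ℕ) (F : (Fin n → Bool) → (Fin n → Bool))
    (S : Finset (Fin n)) (hF : isAndOrBN 2 F) (hS : S.card = m)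
    (hobs : observable F S) :
    (m : ℝ) ≥ 0.188 * n := by
  have hbound := hF.mul_sub_binEntropy_le one_le_two hobs
  have hconst := mul_le_mul_of_nonneg_left mul_log_two_le_log_two_sub_binEntropy_four_inv
    (Nat.cast_nonneg (α := ℝ) n)
  rw [hS] at hbound
  refine le_of_mul_le_mul_right ?_ (log_pos one_lt_two)
  linarith
end

section
/- For every n ≥ 2 there exists a 2-AND-OR-BN F on n nodes such that for every observation set S, if F is observable with S then S is the whole set of n nodes (i.e., all n nodes must be observed); concretely, the BN defined by F(x)_i = x_i ∧ x_n for i ∈ {1,…,n−1} and F(x)_n = x_n ∧ x_1 has this property. -/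
def partnerAndBN {n : ℕ} (p : Fin n → Fin n) (x : Fin n → Bool) : Fin n → Bool :=
  fun i => x i && x (p i)

theorem isAndOrBN_two_partnerAndBN {n : ℕ} {p : Fin n → Fin n} (hp : ∀ i, p i ≠ i) :
    isAndOrBN 2 (partnerAndBN p) := by
  intro i
  refine ⟨![i, p i], ?_, fun _ => false, Or.inl fun x => ?_⟩
  · intro a b hab
    fin_cases a <;> fin_cases b <;> simp_all [eq_comm]
  · simp [partnerAndBN, Fin.univ_succ]

theorem partnerAndBN_false {n : ℕ} (p : Fin n → Fin n) :
    partnerAndBN p (fun _ => false) = fun _ => false := by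
  funext i
  simp [partnerAndBN]

theorem partnerAndBN_indicator {n : ℕ} {p : Fin n → Fin n} (hp : ∀ i, p i ≠ i) (i : Fin n) :
    partnerAndBN p (fun j => decide (j = i)) = fun _ => false := by
  funext j
  by_cases hj : j = i
  · simp [partnerAndBN, hj, hp i]
  · simp [partnerAndBN, hj]

theorem observable.eq_of_eqOn_of_map_eq {n : ℕ} {F : (Fin n → Bool) → (Fin n → Bool)}
    {S : Finset (Fin n)} (hS : observable F S) {x y : Fin n → Bool}
    (hxy : ∀ i ∈ S, x i = y i) (hF : F x = F y) : x = y := by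
  apply hS
  funext t i
  cases t with
  | zero => exact hxy i i.2
  | succ t => simp only [Function.iterate_succ_apply, hF]

theorem eq_univ_of_observable_partnerAndBN {n : ℕ} {p : Fin n → Fin n} (hp : ∀ i, p i ≠ i)
    {S : Finset (Fin n)} (hS : observable (partnerAndBN p) S) : S = Finset.univ := by
  refine Finset.eq_univ_of_forall fun i => ?_
  by_contra hi
  have h := hS.eq_of_eqOn_of_map_eq (x := fun _ => false) (y := fun j => decide (j = i))
    (fun j hj => by simp [show j ≠ i by rintro rfl; exact hi hj])
    (by rw [partnerAndBN_false, partnerAndBN_indicator hp])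
  simpa using congrFun h i

theorem worst_case_two_and_or (n : ℕ) (hn : 2 ≤ n) :
    ∃ F : (Fin n → Bool) → (Fin n → Bool),
      isAndOrBN 2 F ∧
      (∀ (x : Fin n → Bool) (i : Fin n),
        F x i = if i.val = n - 1 then x i && x ⟨0, by omega⟩ else x i && x ⟨n - 1, by omega⟩) ∧
      (∀ S : Finset (Fin n), observable F S → S = Finset.univ) := by
  let p : Fin n → Fin n := fun i => if i.val = n - 1 then ⟨0, by omega⟩ else ⟨n - 1, by omega⟩
  have hp : ∀ i, p i ≠ i := by
    intro i
    simp only [p, ne_eq]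
    split_ifs <;> rw [Fin.ext_iff] <;> dsimp only <;> omega
  refine ⟨partnerAndBN p, isAndOrBN_two_partnerAndBN hp, fun x i => ?_,
    fun S hS => eq_univ_of_observable_partnerAndBN hp hS⟩
  simp only [partnerAndBN, p]
  split_ifs <;> rfl
end

section
/- For every n ≥ 3 with 3 ∣ n, there exists a 2-AND-OR-BN on n nodes that is observable with an observation set of size n/3. -/
/-!
Run `n / 3` independent copies of a 3-node network in parallel and observe the first node of
each copy. A network acting blockwise inherits the AND-OR shape of its blocks, and it is
observable once each block is, so everything reduces to one 3-node 2-AND-OR network that is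
observable from a single node: with updates `y₀ ← y₁ ∧ y₂`, `y₁ ← ¬y₁ ∧ y₂`, `y₂ ← y₁ ∨ y₂`,
the outputs at times `0, 1, 2, 3` are `y₀`, `y₁ ∧ y₂`, `¬y₁ ∧ y₂`, `y₁`.
-/

section Blockwise

variable {k n : ℕ} {ι : Type*} (e : Fin k × ι ≃ Fin n)

def block (x : Fin n → Bool) (j : ι) : Fin k → Bool :=
  fun p => x (e (p, j))

def blockwise (F : (Fin k → Bool) → (Fin k → Bool)) (x : Fin n → Bool) : Fin n → Bool :=
  fun i => F (block e x (e.symm i).2) (e.symm i).1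

variable {e}

theorem block_blockwise (F : (Fin k → Bool) → (Fin k → Bool)) (x : Fin n → Bool) (j : ι) :
    block e (blockwise e F x) j = F (block e x j) := by
  funext p
  simp [block, blockwise]

theorem block_iterate_blockwise (F : (Fin k → Bool) → (Fin k → Bool)) (t : ℕ)
    (x : Fin n → Bool) (j : ι) :
    block e ((blockwise e F)^[t] x) j = F^[t] (block e x j) := by
  induction t with
  | zero => rfl
  | succ t ih => rw [Function.iterate_succ_apply', Function.iterate_succ_apply',
      block_blockwise, ih]

theorem isAndOrBN_blockwise {K : ℕ} {F : (Fin k → Bool) → (Fin k → Bool)}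
    (hF : isAndOrBN K F) : isAndOrBN K (blockwise e F) := by
  intro i
  obtain ⟨idx, hidx, b, hlocal⟩ := hF (e.symm i).1
  refine ⟨fun l => e (idx l, (e.symm i).2), ?_, b, ?_⟩
  · intro l l' h
    exact hidx (Prod.ext_iff.1 (e.injective h)).1
  · rcases hlocal with hand | hor
    · exact Or.inl fun x => hand (block e x (e.symm i).2)
    · exact Or.inr fun x => hor (block e x (e.symm i).2)

theorem observable_blockwise {F : (Fin k → Bool) → (Fin k → Bool)} {S : Finset (Fin k)}
    [Fintype ι] (hF : observable F S) :
    observable (blockwise e F) ((S ×ˢ Finset.univ).map e.toEmbedding) := by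
  intro x x' hxx'
  have hblock : ∀ j, block e x j = block e x' j := by
    intro j
    apply hF
    funext t p
    show F^[t] (block e x j) p = F^[t] (block e x' j) p
    rw [← block_iterate_blockwise, ← block_iterate_blockwise]
    exact congrFun (congrFun hxx' t)
      ⟨e (p, j), Finset.mem_map_of_mem _ (Finset.mem_product.2 ⟨p.2, Finset.mem_univ j⟩)⟩
  funext i
  simpa [block] using congrFun (hblock (e.symm i).2) (e.symm i).1

end Blockwise

def gadget (y : Fin 3 → Bool) : Fin 3 → Bool :=
  ![y 1 && y 2, !y 1 && y 2, y 1 || y 2]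

theorem isAndOrBN_gadget : isAndOrBN 2 gadget := by
  have hidx : Function.Injective ![(1 : Fin 3), 2] := by decide
  intro i
  fin_cases i
  · exact ⟨_, hidx, ![false, false], Or.inl (by decide)⟩
  · exact ⟨_, hidx, ![true, false], Or.inl (by decide)⟩
  · exact ⟨_, hidx, ![false, false], Or.inr (by decide)⟩

theorem eq_of_gadget_output_eq : ∀ y y' : Fin 3 → Bool,
    (∀ t < 4, (gadget^[t] y) 0 = (gadget^[t] y') 0) → y = y' := by
  decide

theorem observable_gadget : observable gadget {0} := by
  intro y y' h
  exact eq_of_gadget_output_eq y y' fun t _ =>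
    congrFun (congrFun h t) ⟨0, Finset.mem_singleton_self 0⟩

theorem best_case_two_and_or_general (n : ℕ) (hdvd : 3 ∣ n) :
    ∃ (F : (Fin n → Bool) → (Fin n → Bool)) (S : Finset (Fin n)),
      isAndOrBN 2 F ∧ S.card = n / 3 ∧ observable F S := by
  obtain ⟨m, rfl⟩ := hdvd
  let e : Fin 3 × Fin m ≃ Fin (3 * m) := finProdFinEquiv
  refine ⟨blockwise e gadget, (({0} : Finset (Fin 3)) ×ˢ Finset.univ).map e.toEmbedding,
    isAndOrBN_blockwise isAndOrBN_gadget, ?_, observable_blockwise observable_gadget⟩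
  simp

theorem best_case_two_and_or (n : ℕ) (hn : 3 ≤ n) (hdvd : 3 ∣ n) :
    ∃ (F : (Fin n → Bool) → (Fin n → Bool)) (S : Finset (Fin n)),
      isAndOrBN 2 F ∧ S.card = n / 3 ∧ observable F S :=
  best_case_two_and_or_general n hdvd
end

section
/- For every n > 3, every 2-AND-OR-BN F on n nodes, and every observation set S with |S| = 1, F is not observable with S (there is no 2-AND-OR-BN with more than 3 nodes that is observable with a single observation node). -/
open Finset

theorem Finset.pair_eq_pair_iff {α : Type*} [DecidableEq α] {a b c d : α} :
    ({a, b} : Finset α) = {c, d} ↔ a = c ∧ b = d ∨ a = d ∧ b = c := by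
  rw [← coe_inj, coe_pair, coe_pair, Set.pair_eq_pair_iff]

theorem Finset.exists_eq_pair_of_mem {α : Type*} [DecidableEq α] {s : Finset α} {a : α}
    (hs : #s = 2) (ha : a ∈ s) : ∃ b, a ≠ b ∧ s = {a, b} := by
  obtain ⟨x, y, hxy, rfl⟩ := card_eq_two.mp hs
  rcases mem_insert.mp ha with rfl | ha
  · exact ⟨y, hxy, rfl⟩
  · obtain rfl := mem_singleton.mp ha
    exact ⟨x, hxy.symm, pair_comm _ _⟩

theorem add_sum_le_of_sum_eq_mul_card {α : Type*} [Fintype α] [DecidableEq α] {f : α → ℕ}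
    {c : ℕ} {s : α} (hsum : ∑ a, f a = c * Fintype.card α) (hf : ∀ a ≠ s, c ≤ f a)
    {T : Finset α} (hT : s ∉ T) : f s + ∑ a ∈ T, f a ≤ c * #T + c := by
  have hrest : #(insert s T)ᶜ • c ≤ ∑ a ∈ (insert s T)ᶜ, f a :=
    card_nsmul_le_sum _ _ _ fun a ha => hf a (by simp_all)
  have hcard : #(insert s T)ᶜ + (#T + 1) = Fintype.card α := by
    have := card_le_univ (insert s T)
    rw [card_compl, card_insert_of_notMem hT] at *
    omega
  have hsplit := sum_add_sum_compl (insert s T) f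
  rw [sum_insert hT, hsum, ← hcard, mul_add] at hsplit
  rw [smul_eq_mul, mul_comm] at hrest
  linarith

theorem Bool.xor_inf_xor_eq_decide (u v b₀ b₁ : Bool) :
    ((u ^^ b₀) ⊓ (v ^^ b₁)) = decide ((u, v) = (!b₀, !b₁)) := by
  revert u v b₀ b₁; decide

theorem Bool.xor_sup_xor_eq_not_decide (u v b₀ b₁ : Bool) :
    ((u ^^ b₀) ⊔ (v ^^ b₁)) = !decide ((u, v) = (b₀, b₁)) := by
  revert u v b₀ b₁; decide

theorem Bool.exists_ne_pair_indicator_eq (e₁ e₂ : Bool × Bool) :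
    ∃ w w' : Bool × Bool, w ≠ w' ∧ (w = e₁ ↔ w' = e₁) ∧ (w = e₂ ↔ w' = e₂) := by
  revert e₁ e₂; decide

set_option synthInstance.maxSize 2000 in
set_option synthInstance.maxHeartbeats 200000 in
theorem Bool.exists_ne_triple_indicator_eq (e₁ e₂ e₃ e₄ : Bool × Bool) :
    ∃ a b c a' b' c' : Bool, (a, b, c) ≠ (a', b', c') ∧
      ((a, b) = e₁ ↔ (a', b') = e₁) ∧ ((a, b) = e₂ ↔ (a', b') = e₂) ∧
      ((b, c) = e₃ ↔ (b', c') = e₃) ∧ ((b, c) = e₄ ↔ (b', c') = e₄) := by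
  revert e₁ e₂ e₃ e₄; decide

section PointIndicator

variable {α : Type*}

def IsPointIndicator (g : (α → Bool) → Bool) (a b : α) : Prop :=
  ∃ c e, ∀ x, g x = (c ^^ decide ((x a, x b) = e))

namespace IsPointIndicator

variable {g : (α → Bool) → Bool} {a b : α}

theorem of_pair_eq [DecidableEq α] {a' b' : α} (h : IsPointIndicator g a b)
    (hab : ({a, b} : Finset α) = {a', b'}) : IsPointIndicator g a' b' := by
  obtain ⟨c, e, hg⟩ := h
  rcases Finset.pair_eq_pair_iff.mp hab with ⟨rfl, rfl⟩ | ⟨rfl, rfl⟩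
  · exact ⟨c, e, hg⟩
  · refine ⟨c, e.swap, fun x => ?_⟩
    simp only [hg, Prod.ext_iff, Prod.fst_swap, Prod.snd_swap, and_comm]

theorem apply_congr (h : IsPointIndicator g a b) {x y : α → Bool} (ha : x a = y a)
    (hb : x b = y b) : g x = g y := by
  obtain ⟨c, e, hg⟩ := h
  rw [hg, hg, ha, hb]

theorem exists_const_of_right (h : IsPointIndicator g a b) :
    ∃ β c, ∀ x, x b = β → g x = c := by
  obtain ⟨c, e, hg⟩ := h
  refine ⟨!e.2, c, fun x hx => ?_⟩
  rw [hg, decide_eq_false (by simp [Prod.ext_iff, hx]), Bool.xor_false]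

end IsPointIndicator

end PointIndicator

theorem isAndOrBN.exists_isPointIndicator {n : ℕ} {F : (Fin n → Bool) → (Fin n → Bool)}
    (hF : isAndOrBN 2 F) (i : Fin n) : ∃ a b, a ≠ b ∧ IsPointIndicator (F · i) a b := by
  obtain ⟨idx, hidx, l, h | h⟩ := hF i
  all_goals
    refine ⟨idx 0, idx 1, hidx.ne (by decide), ?_⟩
    have huniv : (univ : Finset (Fin 2)) = {0, 1} := rfl
    simp only [huniv, inf_insert, inf_singleton, sup_insert, sup_singleton] at h
  · exact ⟨false, _, fun x => (h x).trans (by rw [Bool.xor_inf_xor_eq_decide, Bool.false_xor])⟩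
  · exact ⟨true, _, fun x => (h x).trans (by rw [Bool.xor_sup_xor_eq_not_decide, Bool.true_xor])⟩

theorem observable.injective_pair {n : ℕ} {F : (Fin n → Bool) → (Fin n → Bool)} {s : Fin n}
    (h : observable F {s}) : Function.Injective fun x => (x s, F x) := by
  intro x y hxy
  simp only [Prod.mk.injEq] at hxy
  apply h
  funext t ⟨i, hi⟩
  obtain rfl := mem_singleton.mp hi
  cases t with
  | zero => exact hxy.1
  | succ t => simp only [Function.iterate_succ_apply, hxy.2]

section Wiring

variable {α : Type*} [DecidableEq α]

def Twins (inputs : α → Finset α) (p q a b : α) : Prop :=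
  p ≠ q ∧ inputs p = {a, b} ∧ inputs q = {a, b}

def readers [Fintype α] (inputs : α → Finset α) (v : α) : Finset α :=
  univ.filter (v ∈ inputs ·)

variable {inputs : α → Finset α}

@[simp] theorem mem_readers [Fintype α] {v i : α} : i ∈ readers inputs v ↔ v ∈ inputs i := by
  simp [readers]

theorem sum_card_readers [Fintype α] (h : ∀ i, #(inputs i) = 2) :
    ∑ v, #(readers inputs v) = 2 * Fintype.card α := by
  have := sum_card_bipartiteAbove_eq_sum_card_bipartiteBelow (fun i v => v ∈ inputs i)
    (s := univ) (t := univ)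
  simp only [bipartiteAbove, bipartiteBelow, filter_mem_eq_inter, univ_inter, h,
    sum_const, card_univ, smul_eq_mul] at this
  rw [mul_comm, this]
  rfl

namespace Twins

variable {p q r t a b c d : α}

theorem symm (h : Twins inputs p q a b) : Twins inputs p q b a := by
  simpa only [Twins, pair_comm a b] using h

theorem disjoint (h : Twins inputs p q a b) (h' : Twins inputs r t c d)
    (hne : ({a, b} : Finset α) ≠ {c, d}) : Disjoint ({p, q} : Finset α) {r, t} := by
  have hin : ∀ i ∈ ({p, q} : Finset α), inputs i = {a, b} := by simp [h.2.1, h.2.2]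
  have hin' : ∀ i ∈ ({r, t} : Finset α), inputs i = {c, d} := by simp [h'.2.1, h'.2.2]
  exact disjoint_left.mpr fun i hi hi' => hne ((hin i hi).symm.trans (hin' i hi'))

variable [Fintype α]

theorem pair_subset_readers_left (h : Twins inputs p q a b) : {p, q} ⊆ readers inputs a := by
  simp [insert_subset_iff, h.2.1, h.2.2]

theorem pair_subset_readers_right (h : Twins inputs p q a b) : {p, q} ⊆ readers inputs b :=
  h.symm.pair_subset_readers_left

theorem two_le_card_readers (h : Twins inputs p q a b) : 2 ≤ #(readers inputs a) :=
  (card_pair h.1).symm.le.trans (card_le_card h.pair_subset_readers_left)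

end Twins

end Wiring

structure ObservabilityConditions {α : Type*} [Fintype α] [DecidableEq α]
    (inputs : α → Finset α) (s : α) : Prop where
  card_inputs : ∀ i, #(inputs i) = 2
  exists_twins : ∀ j ≠ s, ∃ p q k, Twins inputs p q j k
  no_isolated_twins : ∀ {p q a b}, Twins inputs p q a b → a ≠ s → b ≠ s →
    readers inputs a ⊆ {p, q} → #(readers inputs b \ {p, q}) ≤ 1 → False
  no_isolated_twin_chain : ∀ {p q r t a b c}, Twins inputs p q a b → Twins inputs r t b c →
    a ≠ c → a ≠ s → b ≠ s → c ≠ s →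
    readers inputs a ∪ readers inputs b ∪ readers inputs c ⊆ {p, q, r, t} → False

namespace ObservabilityConditions

variable {α : Type*} [Fintype α] [DecidableEq α] {inputs : α → Finset α} {s p q j k : α}

theorem two_le_card_readers (H : ObservabilityConditions inputs s) (hj : j ≠ s) :
    2 ≤ #(readers inputs j) := by
  obtain ⟨p, q, k, h⟩ := H.exists_twins j hj
  exact h.two_le_card_readers

theorem card_readers_add_sum_le (H : ObservabilityConditions inputs s) {T : Finset α}
    (hT : s ∉ T) : #(readers inputs s) + ∑ v ∈ T, #(readers inputs v) ≤ 2 * #T + 2 :=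
  add_sum_le_of_sum_eq_mul_card (sum_card_readers H.card_inputs)
    (fun _ hj => H.two_le_card_readers hj) hT

theorem card_readers_add_le (H : ObservabilityConditions inputs s) (hj : j ≠ s) :
    #(readers inputs s) + #(readers inputs j) ≤ 4 := by
  simpa using H.card_readers_add_sum_le (T := {j}) (by simpa using hj.symm)

theorem card_readers_add_card_readers_le (H : ObservabilityConditions inputs s) (hj : j ≠ s)
    (hk : k ≠ s) (hjk : j ≠ k) : #(readers inputs j) + #(readers inputs k) ≤ 6 := by
  have := H.card_readers_add_sum_le (T := {j, k}) (by simp [hj.symm, hk.symm])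
  rw [sum_pair hjk, card_pair hjk] at this
  omega

theorem four_le_card_readers (H : ObservabilityConditions inputs s) (h : Twins inputs p q j k)
    (hj : j ≠ s) (hk : k ≠ s) (hdeg : #(readers inputs j) ≤ 2) : 4 ≤ #(readers inputs k) := by
  by_contra! hlt
  refine H.no_isolated_twins h hj hk
    (eq_of_subset_of_card_le h.pair_subset_readers_left (by rwa [card_pair h.1])).symm.subset ?_
  rw [card_sdiff_of_subset h.pair_subset_readers_right, card_pair h.1]
  omega

theorem twins_ne_observed (H : ObservabilityConditions inputs s) (hα : 2 < Fintype.card α)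
    (h : Twins inputs p q j k) : k ≠ s := by
  intro hks
  rw [hks] at h
  have hs : readers inputs s = {p, q} := by
    refine (eq_of_subset_of_card_le h.pair_subset_readers_right ?_).symm
    simpa [card_pair h.1] using H.card_readers_add_sum_le (notMem_empty s)
  obtain ⟨j', -, hj'⟩ := exists_mem_notMem_of_card_lt_card (s := {s, j}) (t := univ)
    (by rw [card_univ]; exact card_le_two.trans_lt hα)
  simp only [mem_insert, mem_singleton, not_or] at hj'
  obtain ⟨p', q', k', h'⟩ := H.exists_twins j' hj'.1
  have hdeg' := H.card_readers_add_le hj'.1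
  rw [hs, card_pair h.1] at hdeg'
  by_cases hk' : k' = s
  · rw [hk'] at h'
    have hdisj := h'.disjoint h (by simp [Finset.pair_eq_pair_iff, hj'.1, hj'.2])
    have hp' : p' ∈ readers inputs s := h'.pair_subset_readers_right (mem_insert_self _ _)
    rw [hs] at hp'
    exact disjoint_left.mp hdisj (mem_insert_self _ _) hp'
  · have h4 := H.four_le_card_readers h' hj'.1 hk' (by omega)
    have hdeg := H.card_readers_add_le hk'
    rw [hs, card_pair h.1] at hdeg
    omega

theorem exists_twins_eq_readers (H : ObservabilityConditions inputs s) (hk : k ≠ s)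
    (hk4 : 4 ≤ #(readers inputs k)) (hj : j ≠ s) (hjk : j ≠ k) :
    ∃ p q, Twins inputs p q j k ∧ readers inputs j = {p, q} := by
  have hs0 : readers inputs s = ∅ := card_eq_zero.mp (by have := H.card_readers_add_le hk; omega)
  obtain ⟨p, q, k', h⟩ := H.exists_twins j hj
  have hdeg := H.card_readers_add_card_readers_le hk hj (Ne.symm hjk)
  have hk's : k' ≠ s := by
    rintro rfl
    simpa [hs0] using h.pair_subset_readers_right (mem_insert_self _ _)
  have hk'4 := H.four_le_card_readers h hj hk's (by omega)
  obtain rfl : k' = k := by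
    by_contra hne
    have := H.card_readers_add_card_readers_le hk hk's (Ne.symm hne)
    omega
  exact ⟨p, q, h,
    (eq_of_subset_of_card_le h.pair_subset_readers_left (by rw [card_pair h.1]; omega)).symm⟩

theorem two_lt_card_readers (H : ObservabilityConditions inputs s) (hα : 3 < Fintype.card α)
    (h : Twins inputs p q j k) (hj : j ≠ s) (hk : k ≠ s) : 2 < #(readers inputs j) := by
  by_contra! hdeg
  have hk4 := H.four_le_card_readers h hj hk hdeg
  obtain ⟨j₁, hj₁, j₂, hj₂, hj₁₂⟩ := one_lt_card.mp (show 1 < #({s, k}ᶜ : Finset α) by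
    rw [card_compl]
    have := card_le_two (a := s) (b := k)
    omega)
  simp only [mem_compl, mem_insert, mem_singleton, not_or] at hj₁ hj₂
  obtain ⟨p₁, q₁, h₁, hr₁⟩ := H.exists_twins_eq_readers hk hk4 hj₁.1 hj₁.2
  obtain ⟨p₂, q₂, h₂, hr₂⟩ := H.exists_twins_eq_readers hk hk4 hj₂.1 hj₂.2
  have hdisj := h₁.disjoint h₂ (by simp [Finset.pair_eq_pair_iff, hj₁₂, hj₁.2])
  have hrk : readers inputs k = {p₁, q₁} ∪ {p₂, q₂} := by
    refine (eq_of_subset_of_card_le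
      (union_subset h₁.pair_subset_readers_right h₂.pair_subset_readers_right) ?_).symm
    rw [card_union_of_disjoint hdisj, card_pair h₁.1, card_pair h₂.1]
    have := H.card_readers_add_le hk
    omega
  refine H.no_isolated_twin_chain h₁ h₂.symm hj₁₂ hj₁.1 hk hj₂.1 ?_
  rw [hr₁, hr₂, hrk]
  intro i
  simp only [mem_union, mem_insert, mem_singleton]
  tauto

theorem card_le_three (H : ObservabilityConditions inputs s) : Fintype.card α ≤ 3 := by
  by_contra! hα
  have h3 : ∀ j ∈ univ.erase s, 3 ≤ #(readers inputs j) := fun j hj => by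
    obtain ⟨p, q, k, h⟩ := H.exists_twins j (ne_of_mem_erase hj)
    exact H.two_lt_card_readers hα h (ne_of_mem_erase hj)
      (H.twins_ne_observed (by omega) h)
  have hlow := card_nsmul_le_sum _ _ _ h3
  have hup := H.card_readers_add_sum_le (notMem_erase s univ)
  rw [card_erase_of_mem (mem_univ s), card_univ, smul_eq_mul] at *
  omega

end ObservabilityConditions

structure PointForm {α : Type*} [DecidableEq α] (F : (α → Bool) → α → Bool) where
  inputs : α → Finset α
  card_inputs : ∀ i, #(inputs i) = 2
  isPointIndicator : ∀ i a b, inputs i = {a, b} → IsPointIndicator (F · i) a b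

theorem isAndOrBN.nonempty_pointForm {n : ℕ} {F : (Fin n → Bool) → (Fin n → Bool)}
    (hF : isAndOrBN 2 F) : Nonempty (PointForm F) := by
  choose a b hab hind using hF.exists_isPointIndicator
  exact ⟨⟨fun i => {a i, b i}, fun i => card_pair (hab i), fun i _ _ h => (hind i).of_pair_eq h⟩⟩

namespace PointForm

variable {α : Type*} [DecidableEq α] {F : (α → Bool) → α → Bool} (N : PointForm F)

theorem ne_of_inputs_eq {i a b : α} (h : N.inputs i = {a, b}) : a ≠ b := by
  rintro rfl
  simpa [h] using N.card_inputs i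

theorem exists_inputs_eq {i v : α} (hv : v ∈ N.inputs i) : ∃ k, v ≠ k ∧ N.inputs i = {v, k} :=
  exists_eq_pair_of_mem (N.card_inputs i) hv

theorem apply_congr {i : α} {x y : α → Bool} (h : ∀ v ∈ N.inputs i, x v = y v) :
    F x i = F y i := by
  obtain ⟨a, b, -, hab⟩ := card_eq_two.mp (N.card_inputs i)
  exact (N.isPointIndicator i a b hab).apply_congr (h a (by simp [hab])) (h b (by simp [hab]))

variable [Fintype α] {s : α}

theorem exists_twins (hinj : Function.Injective fun x : α → Bool => (x s, F x)) {j : α}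
    (hj : j ≠ s) : ∃ p q k, Twins N.inputs p q j k := by
  by_contra! hno
  choose k hk using fun i : readers N.inputs j => N.exists_inputs_eq (mem_readers.mp i.2)
  have hk_inj : Function.Injective k := fun i i' h => by
    by_contra hne
    exact hno i i' (k i) ⟨fun h' => hne (Subtype.ext h'), (hk i).2, h ▸ (hk i').2⟩
  choose β c hβ using fun i : readers N.inputs j =>
    (N.isPointIndicator i j (k i) (hk i).2).exists_const_of_right
  obtain ⟨z, hz⟩ : ∃ z : α → Bool, ∀ i, z (k i) = β i :=
    ⟨Function.extend k β fun _ => false, hk_inj.extend_apply β _⟩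
  have hF : F (Function.update z j false) = F (Function.update z j true) := by
    funext i
    by_cases hi : i ∈ readers N.inputs j
    · have hβi : ∀ u, Function.update z j u (k ⟨i, hi⟩) = β ⟨i, hi⟩ := fun u => by
        rw [Function.update_of_ne (hk ⟨i, hi⟩).1.symm, hz]
      exact (hβ _ _ (hβi false)).trans (hβ _ _ (hβi true)).symm
    · refine N.apply_congr fun v hv => ?_
      have : v ≠ j := by rintro rfl; exact hi (mem_readers.mpr hv)
      simp [Function.update_of_ne this]
  have := hinj (Prod.ext (by simp [Function.update_of_ne hj.symm]) hF)
  simpa using congrFun this j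

theorem exists_const_of_readers_sdiff {a b : α} {K : Finset α} (hra : readers N.inputs a ⊆ K)
    (hrb : #(readers N.inputs b \ K) ≤ 1) : ∃ z : α → Bool, ∀ i ∈ readers N.inputs b \ K,
      ∃ c, ∀ x : α → Bool, (∀ v, v ≠ a → v ≠ b → x v = z v) → F x i = c := by
  rcases (readers N.inputs b \ K).eq_empty_or_nonempty with he | ⟨i₀, hi₀⟩
  · exact ⟨fun _ => false, by simp [he]⟩
  obtain ⟨m, hbm, hm⟩ := N.exists_inputs_eq (mem_readers.mp (mem_sdiff.mp hi₀).1)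
  have hma : m ≠ a := by
    rintro rfl
    exact (mem_sdiff.mp hi₀).2 (hra (mem_readers.mpr (by simp [hm])))
  obtain ⟨β, c, hc⟩ := (N.isPointIndicator i₀ b m hm).exists_const_of_right
  refine ⟨fun _ => β, fun i hi => ⟨c, fun x hx => ?_⟩⟩
  rw [card_le_one.mp hrb i hi i₀ hi₀]
  exact hc x (hx m hma hbm.symm)

theorem no_isolated_twins (hinj : Function.Injective fun x : α → Bool => (x s, F x))
    {p q a b : α} (h : Twins N.inputs p q a b) (ha : a ≠ s) (hb : b ≠ s)
    (hra : readers N.inputs a ⊆ {p, q}) (hrb : #(readers N.inputs b \ {p, q}) ≤ 1) : False := by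
  obtain ⟨z, hz⟩ := N.exists_const_of_readers_sdiff hra hrb
  have hab := N.ne_of_inputs_eq h.2.1
  obtain ⟨cp, ep, hp⟩ := N.isPointIndicator p a b h.2.1
  obtain ⟨cq, eq, hq⟩ := N.isPointIndicator q a b h.2.2
  obtain ⟨w, w', hww', hwp, hwq⟩ := Bool.exists_ne_pair_indicator_eq ep eq
  let x := Function.update (Function.update z a w.1) b w.2
  let y := Function.update (Function.update z a w'.1) b w'.2
  have hxw : (x a, x b) = w := by simp [x, hab]
  have hyw : (y a, y b) = w' := by simp [y, hab]
  have hxz : ∀ v, v ≠ a → v ≠ b → x v = z v := fun v hva hvb => by simp [x, hva, hvb]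
  have hyz : ∀ v, v ≠ a → v ≠ b → y v = z v := fun v hva hvb => by simp [y, hva, hvb]
  have hF : F x = F y := by
    funext i
    by_cases hi : i ∈ ({p, q} : Finset α)
    · rcases mem_insert.mp hi with rfl | hi
      · simp only [hp, hxw, hyw, hwp]
      · obtain rfl := mem_singleton.mp hi
        simp only [hq, hxw, hyw, hwq]
    by_cases hib : i ∈ readers N.inputs b
    · obtain ⟨c, hc⟩ := hz i (mem_sdiff.mpr ⟨hib, hi⟩)
      rw [hc x hxz, hc y hyz]
    refine N.apply_congr fun v hv => ?_
    have hva : v ≠ a := by rintro rfl; exact hi (hra (mem_readers.mpr hv))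
    have hvb : v ≠ b := by rintro rfl; exact hib (mem_readers.mpr hv)
    rw [hxz v hva hvb, hyz v hva hvb]
  have hs : x s = y s := by rw [hxz s ha.symm hb.symm, hyz s ha.symm hb.symm]
  have hxy := hinj (Prod.ext hs hF)
  exact hww' (hxw.symm.trans (hxy ▸ hyw))

theorem no_isolated_twin_chain (hinj : Function.Injective fun x : α → Bool => (x s, F x))
    {p q r t a b c : α} (h₁ : Twins N.inputs p q a b) (h₂ : Twins N.inputs r t b c)
    (hac : a ≠ c) (ha : a ≠ s) (hb : b ≠ s) (hc : c ≠ s)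
    (hread : readers N.inputs a ∪ readers N.inputs b ∪ readers N.inputs c ⊆ {p, q, r, t}) :
    False := by
  have hab := N.ne_of_inputs_eq h₁.2.1
  have hbc := N.ne_of_inputs_eq h₂.2.1
  obtain ⟨cp, ep, hp⟩ := N.isPointIndicator p a b h₁.2.1
  obtain ⟨cq, eq, hq⟩ := N.isPointIndicator q a b h₁.2.2
  obtain ⟨cr, er, hr⟩ := N.isPointIndicator r b c h₂.2.1
  obtain ⟨ct, et, ht⟩ := N.isPointIndicator t b c h₂.2.2
  obtain ⟨u₁, u₂, u₃, w₁, w₂, w₃, hne, hwp, hwq, hwr, hwt⟩ :=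
    Bool.exists_ne_triple_indicator_eq ep eq er et
  let x : α → Bool := fun v =>
    if v = a then u₁ else if v = b then u₂ else if v = c then u₃ else false
  let y : α → Bool := fun v =>
    if v = a then w₁ else if v = b then w₂ else if v = c then w₃ else false
  have hx : x a = u₁ ∧ x b = u₂ ∧ x c = u₃ := by simp [x, hab.symm, hac.symm, hbc.symm]
  have hy : y a = w₁ ∧ y b = w₂ ∧ y c = w₃ := by simp [y, hab.symm, hac.symm, hbc.symm]
  have hxy_off : ∀ v, v ≠ a → v ≠ b → v ≠ c → x v = y v := fun v hva hvb hvc => by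
    simp [x, y, hva, hvb, hvc]
  have hF : F x = F y := by
    funext i
    by_cases hi : i ∈ ({p, q, r, t} : Finset α)
    · simp only [mem_insert, mem_singleton] at hi
      rcases hi with rfl | rfl | rfl | rfl
      · simp only [hp, hx, hy, hwp]
      · simp only [hq, hx, hy, hwq]
      · simp only [hr, hx, hy, hwr]
      · simp only [ht, hx, hy, hwt]
    refine N.apply_congr fun v hv => hxy_off v ?_ ?_ ?_ <;> rintro rfl <;>
      exact hi (hread (by simp [hv]))
  have hxy := hinj (Prod.ext (hxy_off s ha.symm hb.symm hc.symm) hF)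
  apply hne
  rw [← hx.1, ← hx.2.1, ← hx.2.2, ← hy.1, ← hy.2.1, ← hy.2.2, hxy]

theorem observabilityConditions (hinj : Function.Injective fun x : α → Bool => (x s, F x)) :
    ObservabilityConditions N.inputs s :=
  ⟨N.card_inputs, fun _ hj => N.exists_twins hinj hj, N.no_isolated_twins hinj,
    N.no_isolated_twin_chain hinj⟩

end PointForm

theorem no_single_observation_two_and_or (n : ℕ) (hn : 3 < n)
    (F : (Fin n → Bool) → (Fin n → Bool)) (hF : isAndOrBN 2 F)
    (S : Finset (Fin n)) (hS : S.card = 1) :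
    ¬ observable F S := by
  intro hobs
  obtain ⟨s, rfl⟩ := card_eq_one.mp hS
  obtain ⟨N⟩ := hF.nonempty_pointForm
  have := (N.observabilityConditions hobs.injective_pair).card_le_three
  rw [Fintype.card_fin] at this
  omega
end

section
/- For every n > 3 and every 2-AND-OR-BN F on n nodes, there exist three pairwise distinct states x¹, x², x³ : Fin n → Bool with F x¹ = F x² = F x³; equivalently, some state a : Fin n → Bool has at least 3 preimages under F. -/
open Finset Function

def boolSign (b : Bool) : ℤ := if b then -1 else 1

section BoolSign

variable (p q : Bool)

lemma boolSign_xor : boolSign (p ^^ q) = boolSign p * boolSign q := by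
  cases p <;> cases q <;> rfl

lemma boolSign_not : boolSign (!p) = -boolSign p := by cases p <;> rfl

lemma boolSign_mul_self : boolSign p * boolSign p = 1 := by cases p <;> rfl

lemma two_mul_boolSign_and :
    2 * boolSign (p && q) = 1 + boolSign p + boolSign q - boolSign p * boolSign q := by
  cases p <;> cases q <;> rfl

lemma two_mul_boolSign_or :
    2 * boolSign (p || q) = -1 + boolSign p + boolSign q + boolSign p * boolSign q := by
  cases p <;> cases q <;> rfl

end BoolSign

section Cube

variable {ι : Type*} [Fintype ι]

/-- Equals `card ι - 2 * hammingDist σ a`. -/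
def signCorr (σ a : ι → Bool) : ℤ := ∑ i, boolSign (σ i) * boolSign (a i)

lemma signCorr_self (σ : ι → Bool) : signCorr σ σ = Fintype.card ι := by
  simp [signCorr, boolSign_mul_self]

variable [DecidableEq ι]

lemma sum_eq_zero_of_flip_eq_neg (i : ι) (f : (ι → Bool) → ℤ)
    (hf : ∀ x, f (update x i (!x i)) = -f x) : ∑ x, f x = 0 := by
  have hflip : Involutive fun x : ι → Bool => update x i (!x i) := fun x => by simp
  have h := Fintype.sum_equiv hflip.toPerm _ _ fun x => (hf x).symm
  rw [sum_neg_distrib] at h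
  omega

lemma sum_boolSign_apply (i : ι) : ∑ x : ι → Bool, boolSign (x i) = 0 :=
  sum_eq_zero_of_flip_eq_neg i _ fun x => by simp [boolSign_not]

lemma sum_boolSign_apply_mul {i j : ι} (hij : i ≠ j) :
    ∑ x : ι → Bool, boolSign (x i) * boolSign (x j) = 0 :=
  sum_eq_zero_of_flip_eq_neg i _ fun x => by
    simp [update_of_ne hij.symm, boolSign_not]

lemma two_mul_sum_boolSign_and {i j : ι} (hij : i ≠ j) (b c : Bool) :
    2 * ∑ x : ι → Bool, boolSign ((x i ^^ b) && (x j ^^ c)) = 2 ^ Fintype.card ι := by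
  have hpoint : ∀ x : ι → Bool, 2 * boolSign ((x i ^^ b) && (x j ^^ c)) =
      1 + boolSign b * boolSign (x i) + boolSign c * boolSign (x j)
        - boolSign b * boolSign c * (boolSign (x i) * boolSign (x j)) := fun x => by
    rw [two_mul_boolSign_and, boolSign_xor, boolSign_xor]; ring
  rw [mul_sum, sum_congr rfl fun x _ => hpoint x]
  simp only [sum_add_distrib, sum_sub_distrib, ← mul_sum, sum_boolSign_apply,
    sum_boolSign_apply_mul hij]
  simp

lemma two_mul_sum_boolSign_or {i j : ι} (hij : i ≠ j) (b c : Bool) :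
    2 * ∑ x : ι → Bool, boolSign ((x i ^^ b) || (x j ^^ c)) = -2 ^ Fintype.card ι := by
  have hpoint : ∀ x : ι → Bool, 2 * boolSign ((x i ^^ b) || (x j ^^ c)) =
      -1 + boolSign b * boolSign (x i) + boolSign c * boolSign (x j)
        + boolSign b * boolSign c * (boolSign (x i) * boolSign (x j)) := fun x => by
    rw [two_mul_boolSign_or, boolSign_xor, boolSign_xor]; ring
  rw [mul_sum, sum_congr rfl fun x _ => hpoint x]
  simp only [sum_add_distrib, ← mul_sum, sum_boolSign_apply, sum_boolSign_apply_mul hij]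
  simp

lemma sum_signCorr (σ : ι → Bool) : ∑ a, signCorr σ a = 0 := by
  simp only [signCorr]
  rw [sum_comm]
  simp [← mul_sum, sum_boolSign_apply]

lemma sum_signCorr_sq (σ : ι → Bool) :
    ∑ a, signCorr σ a ^ 2 = Fintype.card ι * 2 ^ Fintype.card ι := by
  have hterm : ∀ i j, ∑ a : ι → Bool,
      boolSign (σ i) * boolSign (a i) * (boolSign (σ j) * boolSign (a j)) =
        if i = j then 2 ^ Fintype.card ι else 0 := by
    intro i j
    split_ifs with hij
    · subst hij; simp [mul_mul_mul_comm, boolSign_mul_self]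
    · simp [mul_mul_mul_comm, ← mul_sum, sum_boolSign_apply_mul hij]
  simp only [signCorr, sq, sum_mul_sum]
  rw [sum_comm]
  simp_rw [sum_comm (s := (univ : Finset (ι → Bool))), hterm]
  simp

lemma sum_two_add_signCorr_sq (σ : ι → Bool) :
    ∑ a, (2 + signCorr σ a) ^ 2 = (4 + Fintype.card ι : ℤ) * 2 ^ Fintype.card ι := by
  simp only [add_sq, sum_add_distrib, ← mul_sum, sum_signCorr, sum_signCorr_sq]
  simp only [sum_const, card_univ, Fintype.card_pi, Fintype.card_bool, prod_const,
    Int.nsmul_eq_mul, Nat.cast_pow, Nat.cast_ofNat, mul_zero, add_zero]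
  ring

end Cube

section Fibres

variable {α β : Type*} [Fintype α] [Fintype β] [DecidableEq β]

lemma sum_card_fiber_mul (F : α → β) (h : β → ℤ) :
    ∑ a, (#{x | F x = a} : ℤ) * h a = ∑ x, h (F x) := by
  simp [← sum_fiberwise' univ F h]

lemma sum_card_fiber_sq_le (F : α → β) {k : ℕ} (hk : ∀ a, #{x | F x = a} ≤ k) :
    ∑ a, (#{x | F x = a} : ℤ) ^ 2 ≤ k * Fintype.card α :=
  calc ∑ a, (#{x | F x = a} : ℤ) ^ 2 = ∑ x, (#{y | F y = F x} : ℤ) := by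
        simpa only [sq] using sum_card_fiber_mul F fun a => (#{x | F x = a} : ℤ)
    _ ≤ ∑ _x : α, (k : ℤ) := sum_le_sum fun x _ => by exact_mod_cast hk (F x)
    _ = k * Fintype.card α := by simp [mul_comm]

end Fibres

lemma exists_two_lt_card_fiber {ι : Type*} [Fintype ι] [DecidableEq ι]
    (hι : 4 ≤ Fintype.card ι) (F : (ι → Bool) → ι → Bool) (σ : ι → Bool)
    (hσ : 2 * ∑ x, signCorr σ (F x) = Fintype.card ι * 2 ^ Fintype.card ι) :
    ∃ a, 2 < #{x | F x = a} := by
  by_contra! hN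
  set n := Fintype.card ι
  set N : (ι → Bool) → ℤ := fun a => #{x | F x = a}
  set w : (ι → Bool) → ℤ := fun a => 2 + signCorr σ a
  have hn : (4 : ℤ) ≤ n := by exact_mod_cast hι
  have hNN : ∑ a, N a ^ 2 ≤ 2 * 2 ^ n := by simpa using sum_card_fiber_sq_le F hN
  have hNw : 2 * ∑ a, N a * w a = (4 + n) * 2 ^ n := by
    rw [sum_card_fiber_mul]
    simp only [w, sum_add_distrib, mul_add, hσ]
    simp only [sum_const, card_univ, Fintype.card_pi, Fintype.card_bool, prod_const,
      Int.nsmul_eq_mul, Nat.cast_pow, Nat.cast_ofNat]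
    ring
  have hsum : ∑ a, (2 * N a - w a) ^ 2 ≤ 0 := by
    have hexpand : ∑ a, (2 * N a - w a) ^ 2 =
        4 * ∑ a, N a ^ 2 - 2 * (2 * ∑ a, N a * w a) + ∑ a, w a ^ 2 := by
      simp only [sub_sq, sum_add_distrib, sum_sub_distrib, mul_sum]
      ring_nf
    rw [hexpand, hNw, sum_two_add_signCorr_sq]
    nlinarith [pow_pos (two_pos : (0 : ℤ) < 2) n]
  have hσσ : (2 * N σ - w σ) ^ 2 ≤ 0 :=
    (single_le_sum (fun a _ => sq_nonneg (2 * N a - w a)) (mem_univ σ)).trans hsum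
  have hwσ : w σ = 2 + n := by simp [w, signCorr_self, n]
  have hNσ : N σ ≤ 2 := Int.ofNat_le.mpr (hN σ)
  nlinarith

lemma isAndOrBN.exists_two_mul_sum_boolSign_eq {n : ℕ} {F : (Fin n → Bool) → Fin n → Bool}
    (hF : isAndOrBN 2 F) (i : Fin n) :
    ∃ s : Bool, 2 * ∑ x, boolSign s * boolSign (F x i) = 2 ^ n := by
  obtain ⟨idx, hinj, b, hand | hor⟩ := hF i
  · refine ⟨false, ?_⟩
    have hsum := two_mul_sum_boolSign_and (hinj.ne zero_ne_one) (b 0) (b 1)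
    simp only [show boolSign false = 1 from rfl, one_mul, hand]
    simpa [Fin.univ_succ] using hsum
  · refine ⟨true, ?_⟩
    have hsum := two_mul_sum_boolSign_or (hinj.ne zero_ne_one) (b 0) (b 1)
    simp only [show boolSign true = -1 from rfl, neg_one_mul, sum_neg_distrib, mul_neg, hor]
    simpa [Fin.univ_succ] using congrArg Neg.neg hsum

lemma isAndOrBN.exists_two_mul_sum_signCorr_eq {n : ℕ} {F : (Fin n → Bool) → Fin n → Bool}
    (hF : isAndOrBN 2 F) : ∃ σ : Fin n → Bool, 2 * ∑ x, signCorr σ (F x) = n * 2 ^ n := by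
  choose σ hσ using hF.exists_two_mul_sum_boolSign_eq
  refine ⟨σ, ?_⟩
  simp only [signCorr]
  rw [sum_comm, mul_sum]
  simp [hσ]

theorem three_identical_images (n : ℕ) (hn : 3 < n)
    (F : (Fin n → Bool) → (Fin n → Bool)) (hF : isAndOrBN 2 F) :
    ∃ x1 x2 x3 : Fin n → Bool,
      x1 ≠ x2 ∧ x1 ≠ x3 ∧ x2 ≠ x3 ∧ F x1 = F x2 ∧ F x2 = F x3 := by
  obtain ⟨σ, hσ⟩ := hF.exists_two_mul_sum_signCorr_eq
  obtain ⟨a, ha⟩ := exists_two_lt_card_fiber (by simp; omega) F σ (by simpa using hσ)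
  obtain ⟨x1, hx1, x2, hx2, x3, hx3, h12, h13, h23⟩ := two_lt_card.mp ha
  simp only [mem_filter, mem_univ, true_and] at hx1 hx2 hx3
  exact ⟨x1, x2, x3, h12, h13, h23, hx1.trans hx2.symm, hx2.trans hx3.symm⟩
end

section
/- For any BN F on n nodes that is observable with an observation set S of size m, every state a : Fin n → Bool satisfies |{x : Fin n → Bool | F x = a}| ≤ 2^m (i.e., 2^m ≥ max_a COUNT(a)). -/
namespace observable

variable {n : ℕ} {F : (Fin n → Bool) → (Fin n → Bool)} {S : Finset (Fin n)}

theorem eq_of_map_eq_of_restrict_eq (hobs : observable F S) {x y : Fin n → Bool}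
    (hF : F x = F y) (hS : ∀ i : S, x i = y i) : x = y := by
  apply hobs
  funext t i
  cases t with
  | zero => exact hS i
  | succ t => simp only [Function.iterate_succ_apply, hF]

theorem injOn_restrict_fiber (hobs : observable F S) (a : Fin n → Bool) :
    Set.InjOn (fun x (i : S) => x i) {x | F x = a} := fun _ hx _ hy hxy =>
  hobs.eq_of_map_eq_of_restrict_eq (hx.trans hy.symm) (congrFun hxy)

end observable

theorem count_preimages_le (n m : ℕ) (F : (Fin n → Bool) → (Fin n → Bool))
    (S : Finset (Fin n)) (hS : S.card = m) (hobs : observable F S)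
    (a : Fin n → Bool) :
    (Finset.univ.filter (fun x : Fin n → Bool => F x = a)).card ≤ 2 ^ m := by
  calc (Finset.univ.filter (fun x : Fin n → Bool => F x = a)).card
      ≤ (Finset.univ : Finset (S → Bool)).card :=
        Finset.card_le_card_of_injOn _ (fun _ _ => Finset.mem_univ _)
          (by simpa only [Finset.coe_filter_univ] using hobs.injOn_restrict_fiber a)
    _ = 2 ^ m := by simp [hS]
end

section
/- For any BN F on n nodes that is observable with an observation set of size m, if l is the number of fixed points of F (states x with F x = x), then 2^m ≥ l. -/
theorem Function.injOn_fixedPoints_of_injective_iterate {α β : Type*} {f : α → α} {h : α → β}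
    (hinj : Injective fun x (t : ℕ) => h (f^[t] x)) : Set.InjOn h (fixedPoints f) := by
  intro x hx y hy hxy
  apply hinj
  funext t
  simp only [(hx.iterate t).eq, (hy.iterate t).eq, hxy]

theorem observable.injOn_fixedPoints {n : ℕ} {F : (Fin n → Bool) → (Fin n → Bool)}
    {S : Finset (Fin n)} (hobs : observable F S) :
    Set.InjOn (fun (x : Fin n → Bool) (i : S) => x i) (Function.fixedPoints F) :=
  Function.injOn_fixedPoints_of_injective_iterate hobs

theorem fixed_points_le (n m : ℕ) (F : (Fin n → Bool) → (Fin n → Bool))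
    (S : Finset (Fin n)) (hS : S.card = m) (hobs : observable F S)
    (l : ℕ) (hl : l = (Finset.univ.filter (fun x : Fin n → Bool => F x = x)).card) :
    l ≤ 2 ^ m := by
  subst hS hl
  calc (Finset.univ.filter (fun x : Fin n → Bool => F x = x)).card
      ≤ (Finset.univ : Finset (S → Bool)).card :=
        Finset.card_le_card_of_injOn _ (fun _ _ => Finset.mem_univ _)
          (hobs.injOn_fixedPoints.mono fun x hx => (Finset.mem_filter.mp hx).2)
    _ = 2 ^ S.card := by simp
end

section
/- For every odd K > 2 and every n with (K + 1) ∣ n, there exists a K-XOR-BN on n nodes that is observable with an observation set of size (K * n) / (K + 1). -/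
/-- `F` is a `K`-XOR-BN: each local function is the XOR of `K` literals
on pairwise distinct variables. -/
def isXorBN {n : ℕ} (K : ℕ) (F : (Fin n → Bool) → (Fin n → Bool)) : Prop :=
  ∀ i : Fin n, ∃ idx : Fin K → Fin n, Function.Injective idx ∧ ∃ b : Bool,
    ∀ x, F x i = (List.ofFn (fun j => x (idx j))).foldr Bool.xor b

/-!
Split the `n = (K + 1) m` nodes into `m` blocks of `K + 1` nodes and let every node be the XOR
of the other `K` nodes of its block. Observe all nodes except one per block. At time `0` this
reveals the observed nodes; at time `1` an observed node `v` shows the XOR of the rest of its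
block, so together with `v` itself it reveals the parity of the whole block, from which the
unobserved node follows.
-/

namespace Bool

def toZMod2 (b : Bool) : ZMod 2 := b.toNat

lemma toZMod2_injective : Function.Injective toZMod2 := by decide

lemma toZMod2_xor (a b : Bool) : (xor a b).toZMod2 = a.toZMod2 + b.toZMod2 := by
  cases a <;> cases b <;> decide

lemma toZMod2_foldr_xor (l : List Bool) (b : Bool) :
    (l.foldr xor b).toZMod2 = (l.map toZMod2).sum + b.toZMod2 := by
  induction l with
  | nil => simp
  | cons a l ih => simp [toZMod2_xor, ih, add_assoc]

end Bool

theorem observable_of_first_two_outputs {n : ℕ} {F : (Fin n → Bool) → (Fin n → Bool)}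
    {S : Finset (Fin n)}
    (h : ∀ x y : Fin n → Bool,
      (∀ i ∈ S, x i = y i) → (∀ i ∈ S, F x i = F y i) → x = y) :
    observable F S := fun x y hxy =>
  h x y (fun i hi => congrFun (congrFun hxy 0) ⟨i, hi⟩)
    (fun i hi => congrFun (congrFun hxy 1) ⟨i, hi⟩)

section BlockXor

variable {k n : ℕ} {β : Type*} (e : Fin (k + 1) × β ≃ Fin n)

/-- Node `e (r, q)` is node `r` of block `q`; each node becomes the XOR of the other nodes of its
block. -/
def blockXor (x : Fin n → Bool) (v : Fin n) : Bool :=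
  (List.ofFn fun j => x (e ((e.symm v).1.succAbove j, (e.symm v).2))).foldr xor false

def blockObservers [Fintype β] : Finset (Fin n) :=
  (({Fin.last k}ᶜ : Finset (Fin (k + 1))) ×ˢ (Finset.univ : Finset β)).map e.toEmbedding

lemma isXorBN_blockXor : isXorBN k (blockXor e) := fun _ =>
  ⟨_, fun _ _ h => Fin.succAbove_right_injective (Prod.ext_iff.mp (e.injective h)).1, false,
    fun _ => rfl⟩

lemma card_blockObservers [Fintype β] : (blockObservers e).card = k * Fintype.card β := by
  simp [blockObservers, Finset.card_compl]

lemma toZMod2_blockXor (x : Fin n → Bool) (r : Fin (k + 1)) (q : β) :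
    (blockXor e x (e (r, q))).toZMod2 = ∑ j, (x (e (r.succAbove j, q))).toZMod2 := by
  simp only [blockXor, Equiv.symm_apply_apply, Bool.toZMod2_foldr_xor, List.map_ofFn, List.sum_ofFn]
  exact add_zero _

lemma sum_toZMod2_block (x : Fin n → Bool) (r : Fin (k + 1)) (q : β) :
    ∑ s, (x (e (s, q))).toZMod2 = (x (e (r, q))).toZMod2 + (blockXor e x (e (r, q))).toZMod2 := by
  rw [toZMod2_blockXor, Fin.sum_univ_succAbove _ r]

lemma observable_blockXor [Fintype β] (hk : 0 < k) :
    observable (blockXor e) (blockObservers e) := by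
  refine observable_of_first_two_outputs fun x y h0 h1 => ?_
  have mem : ∀ r q, r ≠ Fin.last k → e (r, q) ∈ blockObservers e := by
    simp [blockObservers]
  obtain ⟨r₀, hr₀⟩ : ∃ r₀ : Fin (k + 1), r₀ ≠ Fin.last k :=
    ⟨Fin.castSucc ⟨0, hk⟩, (Fin.castSucc_lt_last _).ne⟩
  have hlast : ∀ q, x (e (Fin.last k, q)) = y (e (Fin.last k, q)) := by
    intro q
    have hparity : ∑ s, (x (e (s, q))).toZMod2 = ∑ s, (y (e (s, q))).toZMod2 := by
      rw [sum_toZMod2_block e x r₀, sum_toZMod2_block e y r₀, h0 _ (mem r₀ q hr₀),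
        h1 _ (mem r₀ q hr₀)]
    have hrest : ∑ j : Fin k, (x (e (j.castSucc, q))).toZMod2 =
        ∑ j : Fin k, (y (e (j.castSucc, q))).toZMod2 :=
      Finset.sum_congr rfl fun j _ => by rw [h0 _ (mem _ q (Fin.castSucc_lt_last j).ne)]
    rw [Fin.sum_univ_castSucc, Fin.sum_univ_castSucc, hrest] at hparity
    exact Bool.toZMod2_injective (add_left_cancel hparity)
  funext v
  obtain ⟨⟨r, q⟩, rfl⟩ := e.surjective v
  rcases eq_or_ne r (Fin.last k) with rfl | hr
  · exact hlast q
  · exact h0 _ (mem r q hr)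

end BlockXor

theorem K_xor_best_case_copies_general (K n : ℕ) (hK : 2 < K)
    (hdvd : (K + 1) ∣ n) :
    ∃ (F : (Fin n → Bool) → (Fin n → Bool)) (S : Finset (Fin n)),
      isXorBN K F ∧ S.card = (K * n) / (K + 1) ∧ observable F S := by
  obtain ⟨m, rfl⟩ := hdvd
  refine ⟨blockXor finProdFinEquiv, blockObservers finProdFinEquiv, isXorBN_blockXor _, ?_,
    observable_blockXor _ (by omega)⟩
  rw [card_blockObservers, Fintype.card_fin, mul_left_comm, Nat.mul_div_cancel_left _ K.succ_pos]

theorem K_xor_best_case_copies (K n : ℕ) (hK : 2 < K) (hodd : Odd K)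
    (hdvd : (K + 1) ∣ n) :
    ∃ (F : (Fin n → Bool) → (Fin n → Bool)) (S : Finset (Fin n)),
      isXorBN K F ∧ S.card = (K * n) / (K + 1) ∧ observable F S :=
  K_xor_best_case_copies_general K n hK hdvd
end

section
/- For every K > 2 there exists a K-XOR-BN on n = K + 1 nodes that is observable with a single observation node. -/
/-!
Let `σ` be a permutation of the nodes and update node `i` to the XOR of all nodes except `σ i`.
Over `𝔽₂`, with `s` the parity of the initial state `x`, the `t`-th iterate is
`x ∘ σ^t + e_t s` where `e_t = ∑_{k<t} (n+1)^k`, and `e_t = 1` whenever `t` is odd.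
If `σ` has a cycle of odd length `c` through the observed node `o`, the outputs at times `0`
and `c` give `s`, the later outputs then read off `x` along the cycle, and a single node off
the cycle is recovered from `s`.
-/

-- `Bool` as the field `𝔽₂`: `+` is `xor` and `*` is `and`.
open scoped BooleanRingOfBooleanAlgebra
open Finset Equiv

theorem eq_of_sum_eq_of_forall_ne {ι M : Type*} [Fintype ι] [DecidableEq ι]
    [AddCancelCommMonoid M] {x y : ι → M} (j₀ : ι) (hsum : ∑ j, x j = ∑ j, y j)
    (hne : ∀ j ≠ j₀, x j = y j) : x = y := by
  have hcompl : ∑ j ∈ {j₀}ᶜ, x j = ∑ j ∈ {j₀}ᶜ, y j :=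
    sum_congr rfl fun j hj => hne j (by simpa using hj)
  funext j
  by_cases hj : j = j₀
  · rw [Fintype.sum_eq_add_sum_compl j₀, Fintype.sum_eq_add_sum_compl j₀ y, hcompl] at hsum
    exact hj ▸ add_right_cancel hsum
  · exact hne j hj

theorem Bool.foldr_xor_ofFn {m : ℕ} (f : Fin m → Bool) (b : Bool) :
    (List.ofFn f).foldr Bool.xor b = ∑ j, f j + b := by
  induction m with
  | zero => simp
  | succ m ih =>
    rw [List.ofFn_succ, List.foldr_cons, ih, Fin.sum_univ_succ, add_assoc]
    rfl

theorem Bool.geom_sum_of_odd (r : Bool) {t : ℕ} (ht : Odd t) : ∑ k ∈ range t, r ^ k = 1 := by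
  obtain ⟨m, rfl⟩ := ht
  obtain rfl | rfl : r = 0 ∨ r = 1 := by cases r <;> decide
  · simp [sum_range_succ']
  · simp [two_mul, BooleanRing.add_self]

namespace Fin

theorem val_cycleRange_pow_zero {n : ℕ} (i : Fin (n + 1)) {t : ℕ} (ht : t ≤ i) :
    ((cycleRange i ^ t) 0 : ℕ) = t := by
  induction t with
  | zero => rfl
  | succ t ih =>
    have hlt : (cycleRange i ^ t) 0 < i := by rw [Fin.lt_def, ih (by omega)]; omega
    rw [pow_succ', Perm.mul_apply, cycleRange_of_lt hlt,
      val_add_one_of_lt (lt_of_lt_of_le hlt (le_last i)), ih (by omega)]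

theorem cycleRange_pow_succ_zero {n : ℕ} (i : Fin (n + 1)) :
    (cycleRange i ^ ((i : ℕ) + 1)) 0 = 0 := by
  have hi : (cycleRange i ^ (i : ℕ)) 0 = i := Fin.ext (val_cycleRange_pow_zero i le_rfl)
  rw [pow_succ', Perm.mul_apply, hi, cycleRange_self]

end Fin

namespace XorBN

/-- In characteristic two this is the XOR of all nodes other than `σ i`. -/
def xorAllBut {n : ℕ} (σ : Perm (Fin n)) (x : Fin n → Bool) (i : Fin n) : Bool :=
  ∑ j, x j + x (σ i)

theorem isXorBN_xorAllBut {K : ℕ} (σ : Perm (Fin (K + 1))) : isXorBN K (xorAllBut σ) :=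
  fun i => ⟨(σ i).succAbove, Fin.succAbove_right_injective, false, fun x => by
    rw [Bool.foldr_xor_ofFn, xorAllBut, Fin.sum_univ_succAbove _ (σ i), add_right_comm,
      BooleanRing.add_self, zero_add]
    exact (add_zero _).symm⟩

variable {n : ℕ} (σ : Perm (Fin n))

theorem sum_xorAllBut (x : Fin n → Bool) :
    ∑ i, xorAllBut σ x i = ((n : Bool) + 1) * ∑ i, x i := by
  simp only [xorAllBut, sum_add_distrib, sum_const, card_univ, Fintype.card_fin, nsmul_eq_mul,
    Equiv.sum_comp σ x]
  ring

theorem sum_iterate_xorAllBut (t : ℕ) (x : Fin n → Bool) :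
    ∑ i, (xorAllBut σ)^[t] x i = ((n : Bool) + 1) ^ t * ∑ i, x i := by
  induction t with
  | zero => simp
  | succ t ih => rw [Function.iterate_succ_apply', sum_xorAllBut, ih, pow_succ']; ring

theorem iterate_xorAllBut_apply (t : ℕ) (x : Fin n → Bool) (i : Fin n) :
    (xorAllBut σ)^[t] x i =
      (∑ k ∈ range t, ((n : Bool) + 1) ^ k) * ∑ j, x j + x ((σ ^ t) i) := by
  induction t generalizing i with
  | zero => simp
  | succ t ih =>
    rw [Function.iterate_succ_apply', xorAllBut, sum_iterate_xorAllBut, ih, sum_range_succ,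
      pow_succ, Perm.mul_apply]
    ring

theorem observable_xorAllBut {o j₀ : Fin n} {c : ℕ} (hc : Odd c) (hcyc : (σ ^ c) o = o)
    (horbit : ∀ j ≠ j₀, ∃ t, (σ ^ t) o = j) : observable (xorAllBut σ) {o} := by
  intro x y hxy
  have hout (t : ℕ) := congr_fun (congr_fun hxy t) ⟨o, mem_singleton_self o⟩
  simp only [iterate_xorAllBut_apply] at hout
  have h0 : x o = y o := by simpa using hout 0
  have hsum : ∑ j, x j = ∑ j, y j := by
    simpa [Bool.geom_sum_of_odd _ hc, hcyc, h0] using hout c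
  refine eq_of_sum_eq_of_forall_ne j₀ hsum fun j hj => ?_
  obtain ⟨t, rfl⟩ := horbit j hj
  simpa [hsum] using hout t

end XorBN

open XorBN in
theorem K_xor_single_observation_general (K : ℕ) :
    ∃ F : (Fin (K + 1) → Bool) → (Fin (K + 1) → Bool),
      isXorBN K F ∧ ∃ i : Fin (K + 1), observable F {i} := by
  -- the cycle `0 → 1 → ⋯ → m → 0` has odd length and misses at most the last node
  let m : Fin (K + 1) := ⟨2 * (K / 2), by omega⟩
  refine ⟨xorAllBut (Fin.cycleRange m), isXorBN_xorAllBut _, 0,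
    observable_xorAllBut _ (j₀ := Fin.last K) ⟨K / 2, rfl⟩
      (Fin.cycleRange_pow_succ_zero m) ?_⟩
  intro j hj
  have hjK : (j : ℕ) < K := Fin.val_lt_last hj
  exact ⟨j, Fin.ext (Fin.val_cycleRange_pow_zero m (show (j : ℕ) ≤ 2 * (K / 2) by omega))⟩

theorem K_xor_single_observation (K : ℕ) (hK : 2 < K) :
    ∃ F : (Fin (K + 1) → Bool) → (Fin (K + 1) → Bool),
      isXorBN K F ∧ ∃ i : Fin (K + 1), observable F {i} :=
  K_xor_single_observation_general K
end

section
/- For every K > 2 and every n ≥ K, there exists a BN on n nodes in which the local function of every node is a nested canalyzing function over K pairwise distinct input variables, and which is observable with an observation set of size ⌈n / K⌉. -/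
/-- Nested canalyzing functions over the variable set `V`, generated inductively:
a literal is nested canalyzing, and `ℓ ∨ g`, `ℓ ∧ g` are nested canalyzing whenever
`ℓ` is a literal in a variable not used by the nested canalyzing function `g`. -/
inductive NestedCanalyzing {n : ℕ} : ((Fin n → Bool) → Bool) → Finset (Fin n) → Prop
  | lit (i : Fin n) (b : Bool) : NestedCanalyzing (fun x => Bool.xor (x i) b) {i}
  | or (i : Fin n) (b : Bool) {g : (Fin n → Bool) → Bool} {V : Finset (Fin n)}
      (hi : i ∉ V) (hg : NestedCanalyzing g V) :
      NestedCanalyzing (fun x => (Bool.xor (x i) b) || g x) (insert i V)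
  | and (i : Fin n) (b : Bool) {g : (Fin n → Bool) → Bool} {V : Finset (Fin n)}
      (hi : i ∉ V) (hg : NestedCanalyzing g V) :
      NestedCanalyzing (fun x => (Bool.xor (x i) b) && g x) (insert i V)


/-!
Split the nodes into `⌈n / K⌉` blocks of `K` consecutive nodes, padding the last one with nodes
of block `0`. Node `v` computes `x (succ v) ∧ ¬ ⋀ (window \ {succ v})`, which is nested canalyzing
in the `K` window variables and equals "copy the successor unless the whole window is set, in
which case clear". Each block is thus a rotating register, cleared when it is full and its
padding is set. Observe one cell per block: a register with a cleared cell rotates forever and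
shows every cell, while the observations of a full register are antitone and those of a rotating
one periodic, so the two cannot be confused. Block `0` has no padding, so it is recovered first,
and its trajectory fixes the gates of the other blocks.
-/

theorem NestedCanalyzing.nand {n : ℕ} {U : Finset (Fin n)} (hU : U.Nonempty) :
    NestedCanalyzing (fun x => !decide (∀ u ∈ U, x u = true)) U := by
  induction hU using Finset.Nonempty.cons_induction with
  | singleton a =>
    convert NestedCanalyzing.lit a true using 2
    simp
  | cons a s ha _ ih =>
    rw [Finset.cons_eq_insert]
    convert NestedCanalyzing.or a true ha ih using 2
    simp [Bool.not_and]

theorem NestedCanalyzing.and_nand_erase {n : ℕ} {W : Finset (Fin n)} {a : Fin n}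
    (ha : a ∈ W) (hW : 1 < W.card) :
    NestedCanalyzing (fun x => x a && !decide (∀ u ∈ W.erase a, x u = true)) W := by
  have hne : (W.erase a).Nonempty := by
    rw [← Finset.card_pos, Finset.card_erase_of_mem ha]; omega
  rw [← Finset.insert_erase ha]
  convert NestedCanalyzing.and a false (Finset.notMem_erase a W) (NestedCanalyzing.nand hne)
    using 2
  simp

theorem and_nand_erase_eq_ite {ι : Type*} [DecidableEq ι] {W : Finset ι} {a : ι} (ha : a ∈ W)
    (x : ι → Bool) [Decidable (∀ u ∈ W.erase a, x u = true)] [Decidable (∀ u ∈ W, x u = true)] :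
    (x a && !decide (∀ u ∈ W.erase a, x u = true)) =
      if ∀ u ∈ W, x u = true then false else x a := by
  split_ifs with hall
  · have hrest : ∀ u ∈ W.erase a, x u = true := fun u hu => hall u (Finset.mem_of_mem_erase hu)
    rw [hall a ha, decide_eq_true hrest]
    rfl
  · cases hxa : x a
    · rfl
    · have : ¬ ∀ u ∈ W.erase a, x u = true := fun h => hall fun u hu => by
        by_cases hua : u = a
        · exact hua ▸ hxa
        · exact h u (Finset.mem_erase.2 ⟨hua, hu⟩)
      rw [decide_eq_false this]
      rfl

/-- The trajectory `X t` of a register of `L` cells that rotates by one cell per step, except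
that it is cleared when the gate `γ t` is open and every cell is set. Cells are indexed by `ℕ`,
read modulo `L`. -/
structure IsGatedRotation (L : ℕ) (γ : ℕ → Bool) (X : ℕ → ℕ → Bool) : Prop where
  mod_eq : ∀ t i, X t (i % L) = X t i
  step : ∀ t i,
    X (t + 1) i = if γ t = true ∧ ∀ i' < L, X t i' = true then false else X t (i + 1)

namespace IsGatedRotation

variable {L : ℕ} {γ : ℕ → Bool} {X Y : ℕ → ℕ → Bool}

theorem eq_of_zero_eq (hX : IsGatedRotation L γ X) (hY : IsGatedRotation L γ Y)
    (h₀ : X 0 = Y 0) : X = Y := by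
  funext t
  induction t with
  | zero => exact h₀
  | succ t ih => funext i; simp only [hX.step, hY.step, ih]

/-- A cleared cell survives every rotation, so the register is never cleared. -/
theorem eq_shift (hX : IsGatedRotation L γ X) (hL : 0 < L) {i₀ : ℕ} (hi₀ : X 0 i₀ = false) :
    ∀ t i, X t i = X 0 (i + t) := by
  intro t
  induction t with
  | zero => intro i; rfl
  | succ t ih =>
    have hcleared : X t ((i₀ + (L - 1) * t) % L) = false := by
      rw [hX.mod_eq, ih, Nat.add_assoc, Nat.sub_one_mul,
        Nat.sub_add_cancel (Nat.le_mul_of_pos_left t hL), ← hX.mod_eq,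
        Nat.add_mul_mod_self_left, hX.mod_eq, hi₀]
    have hnot_all_set : ¬ ∀ i' < L, X t i' = true := fun hall => by
      simp [hall _ (Nat.mod_lt _ hL)] at hcleared
    intro i
    rw [hX.step, if_neg (fun h => hnot_all_set h.2), ih, Nat.add_right_comm, Nat.add_assoc]

theorem antitone_of_all_set (hX : IsGatedRotation L γ X) (h₀ : ∀ i, X 0 i = true) :
    Antitone (fun t => X t 0) := by
  have hconst : ∀ t i, X t i = X t 0 := by
    intro t
    induction t with
    | zero => simp [h₀]
    | succ t ih => intro i; simp only [hX.step, ih (i + 1), ih 1]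
  refine antitone_nat_of_succ_le fun t => ?_
  rw [hX.step]
  split_ifs
  · exact Bool.false_le _
  · exact (hconst t 1).le

/-- If `X` starts fully set, its observations `X t 0` are antitone, while those of a register
with a cleared cell are `L`-periodic; agreeing, they are constant, so `Y` is fully set too. -/
theorem all_set_of_obs_eq (hX : IsGatedRotation L γ X) (hY : IsGatedRotation L γ Y) (hL : 0 < L)
    (hobs : ∀ t, X t 0 = Y t 0) (hXs : ∀ i, X 0 i = true) : ∀ i, Y 0 i = true := by
  by_contra! hYs
  obtain ⟨i₁, hi₁⟩ := hYs
  rw [ne_eq, Bool.not_eq_true] at hi₁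
  have hYobs : ∀ t, Y t 0 = Y 0 t := fun t => by rw [hY.eq_shift hL hi₁, Nat.zero_add]
  have hle : Y 0 (L * i₁) ≤ Y 0 i₁ := by
    rw [← hYobs, ← hYobs, ← hobs, ← hobs]
    exact hX.antitone_of_all_set hXs (Nat.le_mul_of_pos_left i₁ hL)
  rw [← hY.mod_eq, Nat.mul_mod_right, ← hobs, hXs, hi₁] at hle
  exact absurd hle (by decide)

theorem eq_of_obs_eq (hX : IsGatedRotation L γ X) (hY : IsGatedRotation L γ Y) (hL : 0 < L)
    (hobs : ∀ t, X t 0 = Y t 0) : X 0 = Y 0 := by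
  by_cases hXs : ∀ i, X 0 i = true
  · funext i
    rw [hXs, hX.all_set_of_obs_eq hY hL hobs hXs]
  by_cases hYs : ∀ i, Y 0 i = true
  · exact absurd (hY.all_set_of_obs_eq hX hL (fun t => (hobs t).symm) hYs) hXs
  simp only [not_forall, Bool.not_eq_true] at hXs hYs
  obtain ⟨i₀, hi₀⟩ := hXs
  obtain ⟨i₁, hi₁⟩ := hYs
  funext i
  rw [← Nat.zero_add i, ← hX.eq_shift hL hi₀, ← hY.eq_shift hL hi₁, hobs]

end IsGatedRotation

theorem Fin.val_div_mul_lt {n : ℕ} (v : Fin n) (K : ℕ) : v / K * K < n :=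
  (Nat.div_mul_le_self v K).trans_lt v.isLt

theorem Nat.lt_ceilDiv_iff_mul_lt {K n j : ℕ} (hK : 0 < K) : j < n ⌈/⌉ K ↔ j * K < n := by
  rw [← not_le, ceilDiv_le_iff_le_mul hK, not_le, Nat.mul_comm]

namespace BlockNetwork

variable (K n : ℕ)

def blockLen (j : ℕ) : ℕ := min K (n - j * K)

variable {K n}

theorem blockLen_pos {j : ℕ} (hK : 0 < K) (hj : j * K < n) : 0 < blockLen K n j := by
  unfold blockLen; omega

theorem blockLen_zero (hn : K ≤ n) : blockLen K n 0 = K := by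
  simp [blockLen, hn]

variable (K n) [NeZero n]

/-- `Fin.ofNat` reduces modulo `n`, which only matters for nonexistent blocks (`n ≤ j * K`). -/
def cell (j i : ℕ) : Fin n := Fin.ofNat n (j * K + i % blockLen K n j)

/-- Block `j` together with the first cells of block `0`, to make up `K` variables. -/
def window (j : ℕ) : Finset (Fin n) :=
  (Finset.range (K - blockLen K n j)).image (cell K n 0) ∪
    (Finset.range (blockLen K n j)).image (cell K n j)

def succ (v : Fin n) : Fin n := cell K n (v / K) (v % K + 1)

def network (x : Fin n → Bool) (v : Fin n) : Bool :=
  x (succ K n v) && !decide (∀ u ∈ (window K n (v / K)).erase (succ K n v), x u = true)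

def observers : Finset (Fin n) := (Finset.range (n ⌈/⌉ K)).image fun j => cell K n j 0

def blockTrajectory (x : Fin n → Bool) (j : ℕ) (t i : ℕ) : Bool :=
  (network K n)^[t] x (cell K n j i)

def gate (x : Fin n → Bool) (j : ℕ) (t : ℕ) : Bool :=
  decide (∀ i < K - blockLen K n j, blockTrajectory K n x 0 t i = true)

variable {K n}

theorem cell_mod_blockLen (j i : ℕ) : cell K n j (i % blockLen K n j) = cell K n j i := by
  simp only [cell, Nat.mod_mod]

theorem val_cell_of_lt {j i : ℕ} (hi : i < blockLen K n j) : (cell K n j i).val = j * K + i := by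
  have : blockLen K n j ≤ n - j * K := min_le_right _ _
  rw [cell, Fin.val_ofNat, Nat.mod_eq_of_lt hi, Nat.mod_eq_of_lt (by omega)]

section
variable {j : ℕ} (hK : 0 < K) (hj : j * K < n)
include hK hj

theorem val_cell (i : ℕ) : (cell K n j i).val = j * K + i % blockLen K n j := by
  rw [← cell_mod_blockLen, val_cell_of_lt (Nat.mod_lt i (blockLen_pos hK hj))]

theorem val_cell_div (i : ℕ) : (cell K n j i).val / K = j := by
  have := Nat.mod_lt i (blockLen_pos hK hj)
  have : blockLen K n j ≤ K := min_le_left _ _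
  rw [val_cell hK hj, Nat.add_comm, Nat.add_mul_div_right _ _ hK, Nat.div_eq_of_lt (by omega),
    Nat.zero_add]

theorem val_cell_mod (i : ℕ) : (cell K n j i).val % K = i % blockLen K n j := by
  have := Nat.mod_lt i (blockLen_pos hK hj)
  have : blockLen K n j ≤ K := min_le_left _ _
  rw [val_cell hK hj, Nat.add_comm, Nat.add_mul_mod_self_right, Nat.mod_eq_of_lt (by omega)]

theorem succ_cell (i : ℕ) : succ K n (cell K n j i) = cell K n j (i + 1) := by
  rw [succ, val_cell_div hK hj, val_cell_mod hK hj, ← cell_mod_blockLen j (i + 1),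
    ← cell_mod_blockLen j (i % _ + 1), Nat.mod_add_mod]

theorem cell_mem_window (i : ℕ) : cell K n j i ∈ window K n j := by
  rw [← cell_mod_blockLen]
  exact Finset.mem_union_right _
    (Finset.mem_image_of_mem _ (Finset.mem_range.2 (Nat.mod_lt i (blockLen_pos hK hj))))

end

theorem cell_div_mod (hK : 0 < K) (v : Fin n) : cell K n (v / K) (v % K) = v := by
  have hj : v / K * K < n := Fin.val_div_mul_lt v K
  have : v % K < blockLen K n (v / K) := by
    have := Nat.div_add_mod' v K
    have := Nat.mod_lt v hK
    unfold blockLen; omega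
  ext
  rw [val_cell hK hj, Nat.mod_eq_of_lt this, Nat.div_add_mod']

theorem forall_mem_window (j : ℕ) (x : Fin n → Bool) :
    (∀ u ∈ window K n j, x u = true) ↔
      (∀ i < K - blockLen K n j, x (cell K n 0 i) = true) ∧
        ∀ i < blockLen K n j, x (cell K n j i) = true := by
  simp only [window, Finset.forall_mem_union, Finset.forall_mem_image, Finset.mem_range]

theorem card_window (hn : K ≤ n) {j : ℕ} (hj : j * K < n) : (window K n j).card = K := by
  have hL : blockLen K n j ≤ K := min_le_left _ _
  have hinj : ∀ j', Set.InjOn (cell K n j') (Finset.range (blockLen K n j')) := by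
    intro j' i hi i' hi' h
    simp only [Finset.coe_range, Set.mem_Iio] at hi hi'
    have := congrArg Fin.val h
    rwa [val_cell_of_lt hi, val_cell_of_lt hi', Nat.add_left_cancel_iff] at this
  have hpad : Set.InjOn (cell K n 0) (Finset.range (K - blockLen K n j)) := by
    refine (hinj 0).mono ?_
    simp only [Finset.coe_range, Set.Iio_subset_Iio_iff, blockLen_zero hn]
    omega
  have hdisj : Disjoint ((Finset.range (K - blockLen K n j)).image (cell K n 0))
      ((Finset.range (blockLen K n j)).image (cell K n j)) := by
    simp only [Finset.disjoint_left, Finset.mem_image, Finset.mem_range]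
    rintro _ ⟨i, hi, rfl⟩ ⟨i', hi', h⟩
    have := congrArg Fin.val h
    rw [val_cell_of_lt hi', val_cell_of_lt (by rw [blockLen_zero hn]; omega)] at this
    rcases j with _ | j
    · rw [blockLen_zero hn] at hi; omega
    · rw [Nat.succ_mul] at this; omega
  rw [window, Finset.card_union_of_disjoint hdisj, Finset.card_image_of_injOn hpad,
    Finset.card_image_of_injOn (hinj j), Finset.card_range, Finset.card_range]
  omega

theorem network_cell (hK : 0 < K) {j : ℕ} (hj : j * K < n) (x : Fin n → Bool) (i : ℕ) :
    network K n x (cell K n j i) =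
      if (∀ i' < K - blockLen K n j, x (cell K n 0 i') = true) ∧
          ∀ i' < blockLen K n j, x (cell K n j i') = true
      then false else x (cell K n j (i + 1)) := by
  rw [network, val_cell_div hK hj, succ_cell hK hj,
    and_nand_erase_eq_ite (cell_mem_window hK hj (i + 1)), if_congr (forall_mem_window j x) rfl rfl]

theorem nestedCanalyzing_network (hK : 1 < K) (hn : K ≤ n) (v : Fin n) :
    NestedCanalyzing (fun x => network K n x v) (window K n (v / K)) := by
  have hj : v / K * K < n := Fin.val_div_mul_lt v K
  have hsucc : succ K n v ∈ window K n (v / K) := cell_mem_window (by omega) hj _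
  exact NestedCanalyzing.and_nand_erase hsucc (by rw [card_window hn hj]; exact hK)

theorem isGatedRotation_blockTrajectory (hK : 0 < K) {j : ℕ} (hj : j * K < n)
    (x : Fin n → Bool) :
    IsGatedRotation (blockLen K n j) (gate K n x j) (blockTrajectory K n x j) where
  mod_eq t i := by rw [blockTrajectory, cell_mod_blockLen]; rfl
  step t i := by
    rw [blockTrajectory, Function.iterate_succ_apply', network_cell hK hj]
    exact if_congr (and_congr_left' decide_eq_true_iff.symm) rfl rfl

theorem card_observers (hK : 0 < K) : (observers K n).card = n ⌈/⌉ K := by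
  rw [observers, Finset.card_image_of_injOn, Finset.card_range]
  intro j hj j' hj' h
  simp only [Finset.coe_range, Set.mem_Iio, Nat.lt_ceilDiv_iff_mul_lt hK] at hj hj'
  have := congrArg Fin.val h
  rw [val_cell_of_lt (blockLen_pos hK hj), val_cell_of_lt (blockLen_pos hK hj')] at this
  exact Nat.eq_of_mul_eq_mul_right hK this

theorem blockTrajectory_zero_eq (hK : 0 < K) {j : ℕ} (hj : j * K < n) {x y : Fin n → Bool}
    (hgate : gate K n x j = gate K n y j)
    (hobs : ∀ t, blockTrajectory K n x j t 0 = blockTrajectory K n y j t 0) :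
    blockTrajectory K n x j 0 = blockTrajectory K n y j 0 := by
  have hX := isGatedRotation_blockTrajectory hK hj x
  rw [hgate] at hX
  exact hX.eq_of_obs_eq (isGatedRotation_blockTrajectory hK hj y) (blockLen_pos hK hj) hobs

theorem observable_network (hK : 0 < K) (hn : K ≤ n) :
    observable (network K n) (observers K n) := by
  intro x y hxy
  have hobs : ∀ j, j * K < n → ∀ t, blockTrajectory K n x j t 0 = blockTrajectory K n y j t 0 :=
    fun j hj t => congrFun (congrFun hxy t) ⟨cell K n j 0,
      Finset.mem_image_of_mem _ (Finset.mem_range.2 ((Nat.lt_ceilDiv_iff_mul_lt hK).2 hj))⟩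
  have h0 : 0 * K < n := by omega
  have hgate0 : gate K n x 0 = gate K n y 0 := by
    funext t
    simp [gate, blockLen_zero hn]
  have hblock0 : blockTrajectory K n x 0 = blockTrajectory K n y 0 :=
    (isGatedRotation_blockTrajectory hK h0 x).eq_of_zero_eq (hgate0 ▸
      isGatedRotation_blockTrajectory hK h0 y) (blockTrajectory_zero_eq hK h0 hgate0 (hobs 0 h0))
  have hgate : ∀ j, gate K n x j = gate K n y j := fun j => by
    unfold gate
    rw [hblock0]
  funext v
  have hv : v / K * K < n := Fin.val_div_mul_lt v K
  have := congrFun (blockTrajectory_zero_eq hK hv (hgate _) (hobs _ hv)) (v % K)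
  rwa [blockTrajectory, blockTrajectory, Function.iterate_zero, id, cell_div_mod hK] at this

end BlockNetwork

theorem K_nc_best_case (K n : ℕ) (hK : 2 < K) (hn : K ≤ n) :
    ∃ F : (Fin n → Bool) → (Fin n → Bool),
      (∀ i : Fin n, ∃ V : Finset (Fin n), V.card = K ∧
        NestedCanalyzing (fun x => F x i) V) ∧
      ∃ S : Finset (Fin n), S.card = (n + K - 1) / K ∧ observable F S := by
  have : NeZero n := ⟨by omega⟩
  open BlockNetwork in
  refine ⟨network K n, fun v => ⟨window K n (v / K), card_window hn ?_,
    nestedCanalyzing_network (by omega) hn v⟩, observers K n,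
    (card_observers (by omega)).trans (Nat.ceilDiv_eq_add_pred_div n K),
    observable_network (by omega) hn⟩
  exact Fin.val_div_mul_lt v K
end

section
/- For every K > 2 and every K-NC-BN F on n nodes, if F is observable with an observation set of size m, then (m : ℝ) ≥ (1 − β_K) * n, where β_K = −( ((2^(K−1) − 1)/2^K) * Real.logb 2 ((2^(K−1) − 1)/2^K) + ((2^(K−1) + 1)/2^K) * Real.logb 2 ((2^(K−1) + 1)/2^K) ). -/
/-- `F` is a `K`-NC-BN: every coordinate function is nested canalyzing over some
`K` pairwise distinct variables. -/
def isNCBN {n : ℕ} (K : ℕ) (F : (Fin n → Bool) → (Fin n → Bool)) : Prop :=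
  ∀ i : Fin n, ∃ V : Finset (Fin n), V.card = K ∧ NestedCanalyzing (fun x => F x i) V

/-! Let `X` be uniform on `Fin n → Bool`. Observability makes `x ↦ (F x, x|S)` injective, so
every fiber of `F` has at most `2 ^ m` points and `H(F X) ≥ (n - m) log 2`. By subadditivity of
entropy, `H(F X) ≤ ∑ᵢ H(Fᵢ X)`. A nested canalyzing function of `K` variables is true on an odd
multiple of `2 ^ (n - K)` points, so its bias differs from `1 / 2` by at least `2⁻ᴷ`, whence
`H(Fᵢ X) ≤ binEntropy ((2 ^ (K - 1) - 1) / 2 ^ K) = β_K log 2`. -/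

open Finset Real

section UniformEntropy

variable {α β : Type*} [Fintype α] [DecidableEq β]

noncomputable def fiberProb (f : α → β) (y : β) : ℝ := #{x | f x = y} / Fintype.card α

/-- Shannon entropy, in nats, of `f X` for `X` uniformly distributed on `α`. -/
noncomputable def uniformEntropy [Fintype β] (f : α → β) : ℝ := ∑ y, negMulLog (fiberProb f y)

lemma fiberProb_nonneg (f : α → β) (y : β) : 0 ≤ fiberProb f y := by
  unfold fiberProb; positivity

lemma fiberProb_le_one (f : α → β) (y : β) : fiberProb f y ≤ 1 :=
  div_le_one_of_le₀ (mod_cast card_le_univ _) (Nat.cast_nonneg _)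

lemma fiberProb_apply_pos (f : α → β) (x : α) : 0 < fiberProb f (f x) :=
  have : Nonempty α := ⟨x⟩
  div_pos (mod_cast card_pos.2 ⟨x, by simp⟩) (mod_cast Fintype.card_pos)

variable [Fintype β]

lemma sum_fiberProb_mul (f : α → β) (φ : β → ℝ) :
    ∑ y, fiberProb f y * φ y = (∑ x, φ (f x)) / Fintype.card α := by
  simp only [fiberProb, div_mul_eq_mul_div, ← Finset.sum_div, ← Finset.sum_fiberwise' univ f φ]
  simp

lemma sum_fiberProb [Nonempty α] (f : α → β) : ∑ y, fiberProb f y = 1 := by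
  simpa using sum_fiberProb_mul f 1

lemma uniformEntropy_eq_sum (f : α → β) :
    uniformEntropy f = (∑ x, -log (fiberProb f (f x))) / Fintype.card α := by
  rw [← sum_fiberProb_mul f fun y => -log (fiberProb f y)]
  simp only [uniformEntropy, negMulLog, neg_mul, mul_neg]

lemma uniformEntropy_eq_binEntropy [Nonempty α] (h : α → Bool) :
    uniformEntropy h = binEntropy (fiberProb h true) := by
  have hsum := sum_fiberProb h
  rw [Fintype.sum_bool] at hsum
  rw [uniformEntropy, Fintype.sum_bool, binEntropy_eq_negMulLog_add_negMulLog_one_sub,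
    show fiberProb h false = 1 - fiberProb h true by linarith]

/-- Gibbs' inequality. -/
lemma uniformEntropy_le_of_sum_le_one [Nonempty α] (f : α → β) (q : β → ℝ) (hq : ∀ y, 0 ≤ q y)
    (hq_pos : ∀ x, 0 < q (f x)) (hq_sum : ∑ y, q y ≤ 1) :
    uniformEntropy f ≤ (∑ x, -log (q (f x))) / Fintype.card α := by
  have hterm : ∀ y,
      negMulLog (fiberProb f y) ≤ fiberProb f y * -log (q y) + (q y - fiberProb f y) := by
    intro y
    rcases (fiberProb_nonneg f y).eq_or_lt with hp | hp
    · simp [← hp, hq y]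
    · obtain ⟨x, rfl⟩ : ∃ x, f x = y := by
        by_contra! hy
        simp [fiberProb, filter_false_of_mem (fun x _ => hy x)] at hp
      have hlog := log_le_sub_one_of_pos (div_pos (hq_pos x) hp)
      rw [log_div (hq_pos x).ne' hp.ne'] at hlog
      have := mul_le_mul_of_nonneg_left hlog hp.le
      rw [show fiberProb f (f x) * (q (f x) / fiberProb f (f x) - 1) = q (f x) - fiberProb f (f x)
        by field_simp] at this
      simp only [negMulLog]
      linarith
  calc uniformEntropy f
      ≤ ∑ y, (fiberProb f y * -log (q y) + (q y - fiberProb f y)) := sum_le_sum fun y _ => hterm y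
    _ ≤ ∑ y, fiberProb f y * -log (q y) := by
        rw [sum_add_distrib, sum_sub_distrib, sum_fiberProb]
        linarith
    _ = _ := sum_fiberProb_mul f _

lemma uniformEntropy_le_sum_uniformEntropy_apply [Nonempty α] {ι : Type*} [Fintype ι]
    [DecidableEq ι] (f : α → ι → β) :
    uniformEntropy f ≤ ∑ i, uniformEntropy (fun x => f x i) := by
  set r : ι → β → ℝ := fun i => fiberProb (fun x => f x i)
  have hr_pos : ∀ x i, r i (f x i) ≠ 0 := fun x i => (fiberProb_apply_pos (f · i) x).ne'
  calc uniformEntropy f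
      ≤ (∑ x, -log (∏ i, r i (f x i))) / Fintype.card α :=
        uniformEntropy_le_of_sum_le_one f (fun y => ∏ i, r i (y i))
          (fun y => prod_nonneg fun i _ => fiberProb_nonneg _ _)
          (fun x => prod_pos fun i _ => fiberProb_apply_pos (f · i) x)
          (by rw [← Fintype.prod_sum]; simp [r, sum_fiberProb])
    _ = ∑ i, uniformEntropy (fun x => f x i) := by
        simp only [log_prod fun i _ => hr_pos _ i, ← sum_neg_distrib, uniformEntropy_eq_sum,
          ← sum_div]
        rw [sum_comm]

lemma log_card_div_le_uniformEntropy [Nonempty α] (f : α → β) {c : ℕ}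
    (hc : ∀ y, #{x | f x = y} ≤ c) :
    log (Fintype.card α / c) ≤ uniformEntropy f := by
  have hterm : ∀ x, log (Fintype.card α / c) ≤ -log (fiberProb f (f x)) := by
    intro x
    have hfiber : 0 < #{x' | f x' = f x} := card_pos.2 ⟨x, by simp⟩
    rw [fiberProb, ← log_inv, inv_div]
    exact log_le_log (div_pos (mod_cast Fintype.card_pos) (mod_cast hfiber.trans_le (hc _)))
      (div_le_div_of_nonneg_left (Nat.cast_nonneg _) (mod_cast hfiber) (mod_cast hc _))
  rw [uniformEntropy_eq_sum, le_div_iff₀ (mod_cast Fintype.card_pos)]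
  simpa [mul_comm] using sum_le_sum fun x (_ : x ∈ univ) => hterm x

end UniformEntropy

lemma card_fiber_le_of_injective {α β γ : Type*} [Fintype α] [DecidableEq β] [Fintype γ]
    (f : α → β) (g : α → γ) (hfg : Function.Injective fun x => (f x, g x)) (y : β) :
    #{x | f x = y} ≤ Fintype.card γ := by
  refine (card_le_card_of_injOn g (fun _ _ => mem_univ _) ?_).trans_eq card_univ
  intro x hx x' hx' h
  simp only [coe_filter, mem_univ, true_and, Set.mem_ofPred_eq] at hx hx'
  exact hfg (Prod.ext (hx.trans hx'.symm) h)

lemma injective_of_observable {n : ℕ} {F : (Fin n → Bool) → (Fin n → Bool)} {S : Finset (Fin n)}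
    (hobs : observable F S) : Function.Injective fun x => (F x, fun i : S => x i) := by
  intro x x' h
  obtain ⟨hF, hS⟩ := Prod.mk.inj h
  refine hobs (funext fun t => ?_)
  cases t with
  | zero => exact hS
  | succ t => simp only [Function.iterate_succ_apply, hF]

section BoolCount

variable {α : Type*} [Fintype α]

lemma card_filter_or (ℓ g : α → Bool) :
    #{x | (ℓ x || g x) = true} = #{x | ℓ x = true} + #{x | (!ℓ x && g x) = true} := by
  rw [← card_filter_add_card_filter_not (s := {x | (ℓ x || g x) = true}) (fun x => ℓ x = true),
    filter_filter, filter_filter]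
  congr 2 <;> ext x <;> cases hx : ℓ x <;> simp [hx]

lemma card_filter_and_mul_two {σ : α → α} (hσ : Function.Involutive σ) {ℓ g : α → Bool}
    (hℓ : ∀ x, ℓ (σ x) = !ℓ x) (hg : ∀ x, g (σ x) = g x) :
    #{x | (ℓ x && g x) = true} * 2 = #{x | g x = true} := by
  have hswap : #{x | (ℓ x && g x) = true} = #{x | (!ℓ x && g x) = true} :=
    card_nbij' σ σ (fun x => by simp [hℓ, hg]) (fun x => by simp [hℓ, hg])
      (fun x _ => hσ x) (fun x _ => hσ x)
  have hsplit := card_filter_add_card_filter_not (s := {x | g x = true}) (fun x => ℓ x = true)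
  simp only [filter_filter] at hsplit
  rw [← hsplit, mul_two]
  nth_rw 2 [hswap]
  congr 2 <;> ext x <;> cases hx : ℓ x <;> simp [hx]

lemma involutive_update_not {ι : Type*} [DecidableEq ι] (i : ι) :
    Function.Involutive fun x : ι → Bool => Function.update x i (!x i) := by
  intro x
  simp

lemma card_filter_xor_apply_mul_two {n : ℕ} (i : Fin n) (b : Bool) :
    #{x : Fin n → Bool | Bool.xor (x i) b = true} * 2 = 2 ^ n := by
  simpa using card_filter_and_mul_two (involutive_update_not i) (ℓ := fun x => Bool.xor (x i) b)
    (g := fun _ => true) (by simp) (by simp)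

end BoolCount

namespace NestedCanalyzing

variable {n : ℕ} {g : (Fin n → Bool) → Bool} {V : Finset (Fin n)}

lemma nonempty (h : NestedCanalyzing g V) : V.Nonempty := by
  cases h <;> simp

lemma apply_update_of_notMem (h : NestedCanalyzing g V) {j : Fin n} (hj : j ∉ V)
    (x : Fin n → Bool) (v : Bool) : g (Function.update x j v) = g x := by
  induction h with
  | lit i b => simp [Function.update_of_ne (Ne.symm (by simpa using hj) : i ≠ j)]
  | or i b hi hg ih | and i b hi hg ih =>
    rw [mem_insert, not_or] at hj
    simp [Function.update_of_ne (Ne.symm hj.1), ih hj.2]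

lemma card_filter_xor_and_mul_two (h : NestedCanalyzing g V) {i : Fin n} (hi : i ∉ V) (b : Bool) :
    #{x | (Bool.xor (x i) b && g x) = true} * 2 = #{x | g x = true} :=
  card_filter_and_mul_two (involutive_update_not i) (by simp)
    (fun x => h.apply_update_of_notMem hi x _)

lemma exists_odd_card_mul_two_pow (h : NestedCanalyzing g V) :
    ∃ a, Odd a ∧ #{x | g x = true} * 2 ^ #V = a * 2 ^ n := by
  induction h with
  | lit i b => exact ⟨1, odd_one, by simpa using card_filter_xor_apply_mul_two i b⟩
  | @or i b g V hi hg ih =>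
    obtain ⟨a, ha, hcount⟩ := ih
    have hnot := card_filter_xor_and_mul_two hg hi (!b)
    simp only [Bool.xor_not] at hnot
    refine ⟨2 ^ #V + a, (Nat.even_pow.2 ⟨even_two, hg.nonempty.card_pos.ne'⟩).add_odd ha, ?_⟩
    rw [card_insert_of_notMem hi, card_filter_or]
    calc _ = #{x : Fin n → Bool | Bool.xor (x i) b = true} * 2 * 2 ^ #V
          + #{x | (!Bool.xor (x i) b && g x) = true} * 2 * 2 ^ #V := by ring
      _ = (2 ^ #V + a) * 2 ^ n := by rw [card_filter_xor_apply_mul_two, hnot, hcount]; ring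
  | @and i b g V hi hg ih =>
    obtain ⟨a, ha, hcount⟩ := ih
    refine ⟨a, ha, ?_⟩
    rw [card_insert_of_notMem hi, pow_succ, mul_comm _ 2, ← mul_assoc,
      card_filter_xor_and_mul_two hg hi, hcount]

lemma exists_odd_fiberProb_mul_two_pow (h : NestedCanalyzing g V) :
    ∃ a : ℕ, Odd a ∧ fiberProb g true * 2 ^ #V = a := by
  obtain ⟨a, ha, hcount⟩ := h.exists_odd_card_mul_two_pow
  refine ⟨a, ha, ?_⟩
  rw [fiberProb, Fintype.card_fun, Fintype.card_bool, Fintype.card_fin, div_mul_eq_mul_div,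
    div_eq_iff (by positivity)]
  exact_mod_cast hcount

end NestedCanalyzing

lemma binEntropy_le_binEntropy_of_abs_sub_le {p q : ℝ} (hp : p ∈ Set.Icc 0 1)
    (h : |q - 2⁻¹| ≤ |p - 2⁻¹|) : binEntropy p ≤ binEntropy q := by
  have hfold : ∀ r, binEntropy r = binEntropy (2⁻¹ - |r - 2⁻¹|) := by
    intro r
    rcases abs_cases (r - 2⁻¹) with ⟨hr, -⟩ | ⟨hr, -⟩
    · rw [hr, ← binEntropy_two_inv_add, add_sub_cancel]
    · rw [hr, sub_neg_eq_add, add_sub_cancel]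
  have hp' : |p - 2⁻¹| ≤ 2⁻¹ := abs_le.2 ⟨by linarith [hp.1], by linarith [hp.2]⟩
  rw [hfold p, hfold q]
  exact binEntropy_strictMonoOn.monotoneOn ⟨by linarith, by linarith [abs_nonneg (p - 2⁻¹)]⟩
    ⟨by linarith, by linarith [abs_nonneg (q - 2⁻¹)]⟩ (by linarith)

/-- An odd multiple of `2⁻ᴷ` is at distance at least `2⁻ᴷ` from `1 / 2 = 2 ^ (K - 1) / 2 ^ K`. -/
lemma binEntropy_le_of_mul_two_pow_eq_odd {K : ℕ} (hK : 2 ≤ K) {p : ℝ} (hp : p ∈ Set.Icc 0 1)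
    {a : ℕ} (ha : Odd a) (hpa : p * 2 ^ K = a) :
    binEntropy p ≤ binEntropy (((2 : ℝ) ^ (K - 1) - 1) / 2 ^ K) := by
  have h2K : (2 : ℝ) ^ K = 2 * 2 ^ (K - 1) := by rw [← pow_succ', Nat.sub_add_cancel (by omega)]
  have hne : (a : ℤ) - 2 ^ (K - 1) ≠ 0 := by
    rw [sub_ne_zero]
    norm_cast
    rintro rfl
    exact Nat.not_even_iff_odd.2 ha (Nat.even_pow.2 ⟨even_two, by omega⟩)
  have hdist : (1 : ℝ) ≤ |(a : ℝ) - 2 ^ (K - 1)| := by exact_mod_cast Int.one_le_abs hne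
  have hpos : (0 : ℝ) < 2 ^ K := by positivity
  have hp_sub : p - 2⁻¹ = ((a : ℝ) - 2 ^ (K - 1)) / 2 ^ K := by
    rw [← hpa, h2K]
    field_simp
  have hq_sub : ((2 : ℝ) ^ (K - 1) - 1) / 2 ^ K - 2⁻¹ = -1 / 2 ^ K := by
    rw [h2K]
    field_simp
    ring
  apply binEntropy_le_binEntropy_of_abs_sub_le hp
  rw [hp_sub, hq_sub, abs_div, abs_div, abs_neg, abs_one, abs_of_pos hpos]
  exact div_le_div_of_nonneg_right hdist hpos.le

lemma binEntropy_div_log_two (q : ℝ) :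
    binEntropy q / log 2 = -(q * logb 2 q + (1 - q) * logb 2 (1 - q)) := by
  simp only [binEntropy, logb, log_inv]
  ring

theorem K_nc_lower_bound (n K m : ℕ) (hK : 2 < K)
    (F : (Fin n → Bool) → (Fin n → Bool)) (hF : isNCBN K F)
    (S : Finset (Fin n)) (hS : S.card = m) (hobs : observable F S) :
    (m : ℝ) ≥
      (1 - (-((((2 : ℝ) ^ (K - 1) - 1) / (2 : ℝ) ^ K) *
              Real.logb 2 (((2 : ℝ) ^ (K - 1) - 1) / (2 : ℝ) ^ K) +
            (((2 : ℝ) ^ (K - 1) + 1) / (2 : ℝ) ^ K) *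
              Real.logb 2 (((2 : ℝ) ^ (K - 1) + 1) / (2 : ℝ) ^ K)))) * n := by
  set q : ℝ := ((2 : ℝ) ^ (K - 1) - 1) / 2 ^ K
  have hq : ((2 : ℝ) ^ (K - 1) + 1) / 2 ^ K = 1 - q := by
    have h2K : (2 : ℝ) ^ K = 2 * 2 ^ (K - 1) := by rw [← pow_succ', Nat.sub_add_cancel (by omega)]
    rw [eq_sub_iff_add_eq, ← add_div, div_eq_one_iff_eq (by positivity), h2K]
    ring
  have hlower : ((n : ℝ) - m) * log 2 ≤ uniformEntropy F := by
    have hfiber y := (card_fiber_le_of_injective _ _ (injective_of_observable hobs) y).trans_eq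
      (by simp [hS] : Fintype.card (S → Bool) = 2 ^ m)
    have := log_card_div_le_uniformEntropy F hfiber
    rwa [Fintype.card_fun, Fintype.card_bool, Fintype.card_fin, Nat.cast_pow, Nat.cast_pow,
      Nat.cast_two, log_div (by positivity) (by positivity), log_pow, log_pow, ← sub_mul] at this
  have hcoord i : uniformEntropy (fun x => F x i) ≤ binEntropy q := by
    obtain ⟨V, hV, hNC⟩ := hF i
    obtain ⟨a, ha, hpa⟩ := hNC.exists_odd_fiberProb_mul_two_pow
    rw [uniformEntropy_eq_binEntropy]
    exact binEntropy_le_of_mul_two_pow_eq_odd hK.le ⟨fiberProb_nonneg _ _, fiberProb_le_one _ _⟩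
      ha (hV ▸ hpa)
  have hupper : uniformEntropy F ≤ n * binEntropy q := by
    refine (uniformEntropy_le_sum_uniformEntropy_apply F).trans ?_
    simpa using sum_le_sum fun i (_ : i ∈ univ) => hcoord i
  rw [hq, ← binEntropy_div_log_two, ge_iff_le, sub_mul, one_mul, sub_le_comm, div_mul_eq_mul_div,
    le_div_iff₀ (log_pos one_lt_two)]
  linarith
end

section
/- For every integer K ≥ 2, the real number I_K := (2^K − 1) * (K − ((2^K − 1)/2^K) * Real.logb 2 (2^K − 1)) satisfies I_K > K. -/
/-!
Write `N = 2 ^ K ≥ 4`. From `log y ≤ y - 1` at `y = 1 - 1/N` and `log 2 ≤ 1` one gets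
`logb 2 (N - 1) ≤ K - 1/N`, which turns the claim into `(N - 1)² > K N`; this holds because
`K ≤ N / 2` and `(N - 1)² ≥ (3N/4)²`.
-/

open Real

lemma Nat.two_mul_le_two_pow (n : ℕ) : 2 * n ≤ 2 ^ n := by
  cases n with
  | zero => simp
  | succ m =>
    have := Nat.lt_two_pow_self (n := m)
    rw [pow_succ]
    omega

lemma Real.logb_sub_one_le {b x : ℝ} (hb : 1 < b) (hb_log : log b ≤ 1) (hx : 1 < x) :
    logb b (x - 1) ≤ logb b x - 1 / x := by
  have hx0 : 0 < x := by linarith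
  have hlogb : 0 < log b := log_pos hb
  have hratio : log ((x - 1) / x) ≤ -(1 / x) := by
    have hsub : (x - 1) / x - 1 = -(1 / x) := by field_simp; ring
    exact hsub ▸ log_le_sub_one_of_pos (div_pos (sub_pos.mpr hx) hx0)
  have hdiv : logb b ((x - 1) / x) ≤ -(1 / x) := by
    rw [logb, div_le_iff₀ hlogb]
    nlinarith [one_div_pos.mpr hx0]
  rw [logb_div (sub_pos.mpr hx).ne' hx0.ne'] at hdiv
  linarith

lemma lt_sub_one_mul_sub_mul {N k y : ℝ} (hN : 4 ≤ N) (h2k : 2 * k ≤ N)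
    (hy : y ≤ k - 1 / N) : k < (N - 1) * (k - (N - 1) / N * y) := by
  have hN0 : 0 < N := by linarith
  have hcoef : 0 ≤ (N - 1) / N := div_nonneg (by linarith) hN0.le
  have hkN : k * N < (N - 1) ^ 2 := by nlinarith
  calc k < k * (N - 1) / N + (N - 1) ^ 2 / N ^ 2 := by
        rw [div_add_div _ _ hN0.ne' (by positivity), lt_div_iff₀ (by positivity)]
        nlinarith
    _ = (N - 1) * (k - (N - 1) / N * (k - 1 / N)) := by field_simp; ring
    _ ≤ (N - 1) * (k - (N - 1) / N * y) := by gcongr; linarith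

theorem I_K_gt_K (K : ℕ) (hK : 2 ≤ K) :
    ((2 : ℝ) ^ K - 1) *
        ((K : ℝ) - (((2 : ℝ) ^ K - 1) / (2 : ℝ) ^ K) * Real.logb 2 ((2 : ℝ) ^ K - 1)) >
      (K : ℝ) := by
  have hN : (4 : ℝ) ≤ 2 ^ K := by
    calc (4 : ℝ) = 2 ^ 2 := by norm_num
      _ ≤ 2 ^ K := pow_le_pow_right₀ (by norm_num) hK
  have h2K : 2 * (K : ℝ) ≤ 2 ^ K := by exact_mod_cast Nat.two_mul_le_two_pow K
  have hlog : logb 2 ((2 : ℝ) ^ K - 1) ≤ K - 1 / 2 ^ K := by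
    have := logb_sub_one_le one_lt_two (log_two_lt_d9.le.trans (by norm_num)) (by linarith)
    rwa [logb_pow, logb_self_eq_one one_lt_two, mul_one] at this
  exact lt_sub_one_mul_sub_mul hN h2K hlog
end
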